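/- arXiv:1908.06957 — 5 statements merged into one kernel-verified Lean document; each statement's English description precedes it below -/
import Mathlib

section
/- Let F be a field, let S and X be positive integers, and let N = S + X. Let f_1, …, f_S be S distinct elements of F and let α_1, …, α_N be N distinct elements of F such that f_s + α_n ≠ 0 for all s ∈ [S] and n ∈ [N]. Then the N×N matrix M_N over F whose n-th row is (1/(f_1+α_n), 1/(f_2+α_n), …, 1/(f_S+α_n), 1, α_n, α_n^2, …, α_n^{X−1}) is invertible. -/
open Polynomial Finset in
/-- **Invertibility of the Cauchy–Vandermonde matrix `M_N`.** -/
theorem cauchy_vandermonde_invertible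
    (F : Type) [Field F] (S X : ℕ) (hS : 0 < S) (hX : 0 < X)
    (f : Fin S → F) (α : Fin (S + X) → F)
    (hf : Function.Injective f) (hα : Function.Injective α)
    (hfα : ∀ (s : Fin S) (n : Fin (S + X)), f s + α n ≠ 0) :
    IsUnit (Matrix.det (Matrix.of fun (n j : Fin (S + X)) =>
      if h : (j : ℕ) < S then (f ⟨j, h⟩ + α n)⁻¹ else α n ^ ((j : ℕ) - S))) := by
  rw [isUnit_iff_ne_zero]
  intro hdet
  obtain ⟨v, hv, hmv⟩ := (Matrix.exists_mulVec_eq_zero_iff).2 hdet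
  set c : Fin S → F := fun s => v (Fin.castAdd X s) with hc
  set d : Fin X → F := fun t => v (Fin.natAdd S t) with hd
  set Pall : F[X] := ∏ s : Fin S, (Polynomial.X + C (f s)) with hPall
  set Q : F[X] := ∑ t : Fin X, C (d t) * Polynomial.X ^ (t : ℕ) with hQ
  set P : F[X] :=
    (∑ s : Fin S, C (c s) * ∏ s' ∈ univ.erase s, (Polynomial.X + C (f s')))
      + Q * Pall with hP
  -- each row gives a root
  have hroot : ∀ n, P.eval (α n) = 0 := by
    intro n
    have h0 : (∑ s : Fin S, (f s + α n)⁻¹ * c s) + ∑ t : Fin X, α n ^ (t : ℕ) * d t = 0 := by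
      have h := congrFun hmv n
      rw [Matrix.mulVec, dotProduct, Fin.sum_univ_add] at h
      refine Eq.trans ?_ h
      congr 1
      · refine Finset.sum_congr rfl fun s _ => ?_
        simp [hc]
      · refine Finset.sum_congr rfl fun t _ => ?_
        rw [Matrix.of_apply, dif_neg (by simp)]
        simp [hd]
    have key : P.eval (α n)
        = (∏ s : Fin S, (α n + f s)) *
          ((∑ s : Fin S, (f s + α n)⁻¹ * c s) + ∑ t : Fin X, α n ^ (t : ℕ) * d t) := by
      simp only [hP, hQ, hPall, eval_add, eval_mul, eval_finset_sum, eval_C,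
        eval_pow, eval_X, eval_prod]
      rw [mul_add]
      congr 1
      · rw [Finset.mul_sum]
        refine Finset.sum_congr rfl fun s _ => ?_
        have herase : (∏ s' : Fin S, (α n + f s')) =
            (α n + f s) * ∏ s' ∈ univ.erase s, (α n + f s') :=
          (Finset.mul_prod_erase univ _ (mem_univ s)).symm
        have hne : f s + α n ≠ 0 := hfα s n
        rw [herase, add_comm (α n) (f s)]
        field_simp
      · rw [Finset.sum_mul, Finset.mul_sum]
        exact Finset.sum_congr rfl fun t _ => by ring
    rw [key, h0, mul_zero]
  -- degree bound
  have hdegQ : Q.natDegree ≤ X - 1 := by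
    refine le_trans (natDegree_sum_le _ _) ?_
    rw [Finset.fold_max_le]
    refine ⟨by omega, fun t _ => ?_⟩
    refine le_trans (natDegree_mul_le) ?_
    simp only [natDegree_C, natDegree_X_pow, zero_add]
    omega
  have hdegPall : Pall.natDegree ≤ S := by
    refine le_trans (natDegree_prod_le _ _) ?_
    refine le_trans (Finset.sum_le_card_nsmul _ _ 1 fun s _ => (natDegree_X_add_C _).le) ?_
    simp
  have hdeg : P.natDegree < S + X := by
    refine lt_of_le_of_lt (natDegree_add_le _ _) ?_
    rw [max_lt_iff]
    constructor
    · refine lt_of_le_of_lt (natDegree_sum_le _ _) ?_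
      rw [Finset.fold_max_lt]
      refine ⟨by positivity, fun s _ => ?_⟩
      refine lt_of_le_of_lt (natDegree_mul_le) ?_
      have h1 : (C (c s)).natDegree = 0 := natDegree_C _
      have h2 : (∏ s' ∈ univ.erase s, (Polynomial.X + C (f s'))).natDegree ≤ S - 1 := by
        refine le_trans (natDegree_prod_le _ _) ?_
        refine le_trans (Finset.sum_le_card_nsmul _ _ 1 fun s' _ => (natDegree_X_add_C _).le) ?_
        simp [Finset.card_erase_of_mem]
      omega
    · exact lt_of_le_of_lt (natDegree_mul_le) (by omega)
  have hP0 : P = 0 := by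
    refine Polynomial.eq_zero_of_natDegree_lt_card_of_eval_eq_zero P hα hroot ?_
    simpa using hdeg
  -- evaluate at -f s to kill c
  have hc0 : ∀ s, c s = 0 := by
    intro s
    have hev : P.eval (-(f s)) = 0 := by rw [hP0, eval_zero]
    have hPallz : Pall.eval (-(f s)) = 0 := by
      rw [hPall, eval_prod]
      exact Finset.prod_eq_zero (mem_univ s) (by simp)
    rw [hP, eval_add, eval_mul, hPallz, mul_zero, add_zero, eval_finset_sum] at hev
    rw [Finset.sum_eq_single s (fun s' _ hne => ?_) (fun h => absurd (mem_univ s) h)] at hev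
    · rw [eval_mul, eval_C, eval_prod] at hev
      have hprodne : (∏ s' ∈ univ.erase s, (Polynomial.X + C (f s')).eval (-(f s))) ≠ 0 := by
        refine prod_ne_zero_iff.2 fun s' hs' => ?_
        have hne : s' ≠ s := (Finset.mem_erase.1 hs').1
        simp only [eval_add, eval_X, eval_C]
        intro h
        exact hne (hf (by linear_combination h))
      rcases mul_eq_zero.1 hev with h | h
      · exact h
      · exact absurd h hprodne
    · rw [eval_mul, eval_prod]
      have : (∏ s'' ∈ univ.erase s', (Polynomial.X + C (f s'')).eval (-(f s))) = 0 :=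
        Finset.prod_eq_zero (Finset.mem_erase.2 ⟨Ne.symm hne, mem_univ s⟩) (by simp)
      rw [this, mul_zero]
  -- kill d
  have hQ0 : Q = 0 := by
    have hsum0 : (∑ s : Fin S, C (c s) * ∏ s' ∈ univ.erase s, (Polynomial.X + C (f s'))) = 0 := by
      refine Finset.sum_eq_zero fun s _ => ?_
      rw [hc0 s, map_zero, zero_mul]
    have hPallne : Pall ≠ 0 := by
      refine Polynomial.Monic.ne_zero ?_
      exact monic_prod_of_monic _ _ fun s _ => monic_X_add_C _
    have : Q * Pall = 0 := by
      have := hP0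
      rw [hP, hsum0, zero_add] at this
      exact this
    rcases mul_eq_zero.1 this with h | h
    · exact h
    · exact absurd h hPallne
  have hd0 : ∀ t, d t = 0 := by
    intro t
    have : Q.coeff (t : ℕ) = 0 := by rw [hQ0, coeff_zero]
    rw [hQ, finset_sum_coeff] at this
    rw [Finset.sum_eq_single t (fun t' _ hne => ?_) (fun h => absurd (mem_univ t) h)] at this
    · simpa using this
    · rw [coeff_C_mul, coeff_X_pow, if_neg (by simpa [Fin.val_eq_val] using hne.symm), mul_zero]
  -- contradiction
  apply hv
  funext j
  refine Fin.addCases (fun s => ?_) (fun t => ?_) j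
  · exact hc0 s
  · exact hd0 t
end

section
/- Let F be a finite field with q elements and let l, k be positive integers. Let Ā be a random matrix taking values in F^{l×k} with arbitrary distribution, and let B̄ be a random matrix uniformly distributed on F^{k×k}, independent of Ā. Then H(Ā) · ∏_{i=1}^{k} (1 − q^{−i}) ≤ H(ĀB̄ | B̄) ≤ H(Ā). -/
open scoped BigOperators Classical

noncomputable section

namespace SDMM

variable {Ω : Type} [Fintype Ω]

/-- The probability that the random variable `X` (on finite sample space `Ω`
with probability mass function `p`) takes the value `a`. -/
def distOf (p : Ω → ℝ) {α : Type*} (X : Ω → α) (a : α) : ℝ :=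
  ∑ ω, if X ω = a then p ω else 0

/-- `p` is a probability mass function on `Ω`. -/
def IsPMF (p : Ω → ℝ) : Prop := (∀ ω, 0 ≤ p ω) ∧ ∑ ω, p ω = 1

/-- Shannon entropy (natural-log units) of the random variable `X`. -/
def H (p : Ω → ℝ) {α : Type*} [Fintype α] (X : Ω → α) : ℝ :=
  ∑ a, Real.negMulLog (distOf p X a)

/-- Conditional Shannon entropy `H(X | Y) = H(X, Y) - H(Y)`. -/
def Hc (p : Ω → ℝ) {α β : Type*} [Fintype α] [Fintype β] (X : Ω → α) (Y : Ω → β) : ℝ :=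
  H p (fun ω => (X ω, Y ω)) - H p Y

/-- Mutual information `I(X ; Y) = H(X) + H(Y) - H(X, Y)`. -/
def MI (p : Ω → ℝ) {α β : Type*} [Fintype α] [Fintype β] (X : Ω → α) (Y : Ω → β) : ℝ :=
  H p X + H p Y - H p (fun ω => (X ω, Y ω))

/-- Conditional mutual information `I(X ; Y | Z)`. -/
def CMI (p : Ω → ℝ) {α β γ : Type*} [Fintype α] [Fintype β] [Fintype γ]
    (X : Ω → α) (Y : Ω → β) (Z : Ω → γ) : ℝ :=
  H p (fun ω => (X ω, Z ω)) + H p (fun ω => (Y ω, Z ω))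
    - H p (fun ω => (X ω, Y ω, Z ω)) - H p Z

/-- `X` is uniformly distributed on `α`. -/
def Uniform (p : Ω → ℝ) {α : Type*} [Fintype α] (X : Ω → α) : Prop :=
  ∀ a, distOf p X a = 1 / Fintype.card α

/-- `X` and `Y` are independent random variables. -/
def IndepRV (p : Ω → ℝ) {α β : Type*} (X : Ω → α) (Y : Ω → β) : Prop :=
  ∀ a b, distOf p (fun ω => (X ω, Y ω)) (a, b) = distOf p X a * distOf p Y b

end SDMM


section Aux

open Real Finset

lemma negMulLog_add_le {a b : ℝ} (ha : 0 ≤ a) (hb : 0 ≤ b) :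
    Real.negMulLog (a + b) ≤ Real.negMulLog a + Real.negMulLog b := by
  have key : ∀ x y : ℝ, 0 ≤ x → 0 ≤ y → -(x * Real.log (x + y)) ≤ Real.negMulLog x := by
    intro x y hx hy
    rcases eq_or_lt_of_le hx with h | h
    · simp [← h]
    · have h1 : Real.log x ≤ Real.log (x + y) := Real.log_le_log h (by linarith)
      have h2 := mul_le_mul_of_nonneg_left h1 hx
      simp only [Real.negMulLog, neg_mul]
      linarith
  have h1 := key a b ha hb
  have h2 := key b a hb ha
  rw [add_comm b a] at h2
  have h3 : Real.negMulLog (a + b) = -(a * Real.log (a + b)) + -(b * Real.log (a + b)) := by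
    simp only [Real.negMulLog, neg_mul]; ring
  linarith

lemma negMulLog_sum_le {ι : Type*} (s : Finset ι) (f : ι → ℝ) :
    (∀ i ∈ s, 0 ≤ f i) → Real.negMulLog (∑ i ∈ s, f i) ≤ ∑ i ∈ s, Real.negMulLog (f i) := by
  induction s using Finset.cons_induction with
  | empty => simp
  | cons i s hi ih =>
    intro h
    rw [Finset.sum_cons, Finset.sum_cons]
    have h1 := negMulLog_add_le (h i (Finset.mem_cons_self i s))
      (Finset.sum_nonneg fun j hj => h j (Finset.mem_cons_of_mem hj))
    have h2 := ih fun j hj => h j (Finset.mem_cons_of_mem hj)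
    linarith

end Aux

set_option maxHeartbeats 2000000 in
/-- **Lemma 5 (`H(ĀB̄ | B̄)` vs `H(Ā)`).**
Over a finite field with `q` elements, if `B̄` is a uniformly random `k × k`
matrix independent of the (arbitrarily distributed) random `l × k` matrix `Ā`,
then `H(Ā)·∏_{i=1}^{k}(1 - q^{-i}) ≤ H(ĀB̄ | B̄) ≤ H(Ā)`. -/
theorem cond_entropy_product_uniform_square
    (l k : ℕ) (hl : 0 < l) (hk : 0 < k)
    (F : Type) [Field F] [Fintype F]
    (Ω : Type) [Fintype Ω] (p : Ω → ℝ) (hp : SDMM.IsPMF p)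
    (A : Ω → Matrix (Fin l) (Fin k) F) (B : Ω → Matrix (Fin k) (Fin k) F)
    (hB : SDMM.Uniform p B) (hAB : SDMM.IndepRV p A B) :
    SDMM.H p A * (∏ i ∈ Finset.range k, (1 - ((Fintype.card F : ℝ))⁻¹ ^ (i + 1))) ≤
        SDMM.Hc p (fun ω => A ω * B ω) B ∧
      SDMM.Hc p (fun ω => A ω * B ω) B ≤ SDMM.H p A := by
  classical
  obtain ⟨hp0, hp1⟩ := hp
  set q := Fintype.card F with hq
  set N := Fintype.card (Matrix (Fin k) (Fin k) F) with hNdef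
  set u : ℝ := (N : ℝ)⁻¹ with hu
  set f : Matrix (Fin l) (Fin k) F → ℝ := fun a => SDMM.distOf p A a with hfdef
  have hf0 : ∀ a, 0 ≤ f a := fun a =>
    Finset.sum_nonneg fun ω _ => by split_ifs; exacts [hp0 ω, le_refl 0]
  have hf1 : ∑ a, f a = 1 := by
    rw [hfdef]
    simp only [SDMM.distOf]
    rw [Finset.sum_comm, ← hp1]
    refine Finset.sum_congr rfl fun ω _ => ?_
    refine (Finset.sum_eq_single (A ω) (fun x _ hx => if_neg fun h => hx h.symm)
      (fun h => absurd (Finset.mem_univ _) h)).trans (if_pos rfl)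
  have hf_le1 : ∀ a, f a ≤ 1 := fun a => by
    calc f a ≤ ∑ a', f a' := Finset.single_le_sum (fun a' _ => hf0 a') (Finset.mem_univ a)
      _ = 1 := hf1
  set S : Matrix (Fin k) (Fin k) F → Matrix (Fin l) (Fin k) F → ℝ :=
    fun b c => ∑ a, if a * b = c then f a else 0 with hSdef
  set E : Matrix (Fin k) (Fin k) F → ℝ :=
    fun b => ∑ c, Real.negMulLog (S b c) with hEdef
  have hSapp : ∀ b c, S b c
      = ∑ a : Matrix (Fin l) (Fin k) F, if a * b = c then f a else 0 := fun b c => rfl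
  have hEapp : ∀ b, E b = ∑ c, Real.negMulLog (S b c) := fun b => rfl
  have hNpos : 0 < N := Fintype.card_pos
  have hu0 : 0 ≤ u := by positivity
  have hBu : ∀ b, SDMM.distOf p B b = u := fun b => by
    rw [hB b, hu, hNdef, one_div]
  have hjoint : ∀ a b, SDMM.distOf p (fun ω => (A ω, B ω)) (a, b) = f a * u := fun a b => by
    rw [hAB a b, hBu b, hfdef]
  -- the distribution of (A*B, B)
  have hdist : ∀ c b, SDMM.distOf p (fun ω => (A ω * B ω, B ω)) (c, b) = u * S b c := by
    intro c b
    have hinner : ∀ a : Matrix (Fin l) (Fin k) F,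
        (∑ ω, if a * b = c ∧ (A ω, B ω) = (a, b) then p ω else 0)
          = u * (if a * b = c then f a else 0) := by
      intro a
      by_cases hc : a * b = c
      · have h1 : (∑ ω, if a * b = c ∧ (A ω, B ω) = (a, b) then p ω else 0)
            = SDMM.distOf p (fun ω => (A ω, B ω)) (a, b) := by
          simp only [SDMM.distOf]
          refine Finset.sum_congr rfl fun ω _ => ?_
          split_ifs with h1 h2 h2 <;> simp_all
        rw [h1, hjoint a b, if_pos hc]
        ring
      · simp [hc]
    have houter : (∑ a : Matrix (Fin l) (Fin k) F,
          ∑ ω, (if a * b = c ∧ (A ω, B ω) = (a, b) then p ω else 0))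
        = SDMM.distOf p (fun ω => (A ω * B ω, B ω)) (c, b) := by
      rw [Finset.sum_comm]
      simp only [SDMM.distOf]
      refine Finset.sum_congr rfl fun ω _ => ?_
      refine (Finset.sum_eq_single (A ω)
        (fun a _ ha => if_neg fun h => ha (congrArg Prod.fst h.2).symm)
        (fun h => absurd (Finset.mem_univ _) h)).trans ?_
      by_cases hb : B ω = b
      · subst hb
        by_cases hc : A ω * B ω = c
        · rw [if_pos ⟨hc, rfl⟩, if_pos (by rw [hc])]
        · rw [if_neg (fun h => hc h.1), if_neg (fun h => hc (congrArg Prod.fst h))]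
      · rw [if_neg (fun h => hb (congrArg Prod.snd h.2)),
          if_neg (fun h => hb (congrArg Prod.snd h))]
    calc SDMM.distOf p (fun ω => (A ω * B ω, B ω)) (c, b)
        = ∑ a : Matrix (Fin l) (Fin k) F,
            ∑ ω, (if a * b = c ∧ (A ω, B ω) = (a, b) then p ω else 0) := houter.symm
      _ = ∑ a : Matrix (Fin l) (Fin k) F, u * (if a * b = c then f a else 0) :=
          Finset.sum_congr rfl fun a _ => hinner a
      _ = u * S b c := by rw [← Finset.mul_sum, ← hSapp b c]
  have hS0 : ∀ b c, 0 ≤ S b c := fun b c =>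
    Finset.sum_nonneg fun a _ => by split_ifs; exacts [hf0 a, le_refl 0]
  have hS1 : ∀ b, ∑ c, S b c = 1 := by
    intro b
    simp only [hSapp]
    rw [Finset.sum_comm, ← hf1]
    refine Finset.sum_congr rfl fun a _ => ?_
    refine (Finset.sum_eq_single (a * b) (fun x _ hx => if_neg fun h => hx h.symm)
      (fun h => absurd (Finset.mem_univ _) h)).trans (if_pos rfl)
  have hS_le1 : ∀ b c, S b c ≤ 1 := fun b c => by
    calc S b c ≤ ∑ c', S b c' := Finset.single_le_sum (fun c' _ => hS0 b c') (Finset.mem_univ c)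
      _ = 1 := hS1 b
  have hE0 : ∀ b, 0 ≤ E b := fun b =>
    Finset.sum_nonneg fun c _ => Real.negMulLog_nonneg (hS0 b c) (hS_le1 b c)
  have hHA : SDMM.H p A = ∑ a, Real.negMulLog (f a) := rfl
  have hHA0 : 0 ≤ SDMM.H p A := by
    rw [hHA]
    exact Finset.sum_nonneg fun a _ => Real.negMulLog_nonneg (hf0 a) (hf_le1 a)
  -- the conditional entropy equals u * ∑ b, E b
  have hHc : SDMM.Hc p (fun ω => A ω * B ω) B = u * ∑ b, E b := by
    have hHB : SDMM.H p B = ∑ _b : Matrix (Fin k) (Fin k) F, Real.negMulLog u :=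
      Finset.sum_congr rfl fun b _ => by rw [hBu b]
    have hHJ : SDMM.H p (fun ω => (A ω * B ω, B ω))
        = ∑ b, (Real.negMulLog u + u * E b) := by
      simp only [SDMM.H]
      rw [Fintype.sum_prod_type, Finset.sum_comm]
      refine Finset.sum_congr rfl fun b _ => ?_
      calc (∑ c, Real.negMulLog (SDMM.distOf p (fun ω => (A ω * B ω, B ω)) (c, b)))
          = ∑ c, (S b c * Real.negMulLog u + u * Real.negMulLog (S b c)) :=
            Finset.sum_congr rfl fun c _ => by rw [hdist c b, Real.negMulLog_mul]
        _ = (∑ c, S b c) * Real.negMulLog u + u * ∑ c, Real.negMulLog (S b c) := by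
            rw [Finset.sum_add_distrib, ← Finset.sum_mul, ← Finset.mul_sum]
        _ = Real.negMulLog u + u * E b := by rw [hS1 b, one_mul, ← hEapp b]
    simp only [SDMM.Hc]
    rw [hHJ, hHB, Finset.sum_add_distrib, ← Finset.mul_sum]
    ring
  -- upper bound on E b
  have hEle : ∀ b, E b ≤ SDMM.H p A := by
    intro b
    have step : ∀ c, Real.negMulLog (S b c)
        ≤ ∑ a : Matrix (Fin l) (Fin k) F,
            (if a * b = c then Real.negMulLog (f a) else 0) := by
      intro c
      rw [hSapp b c]
      refine le_trans (negMulLog_sum_le _ _ fun a _ => by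
        split_ifs; exacts [hf0 a, le_refl 0]) (le_of_eq ?_)
      refine Finset.sum_congr rfl fun a _ => ?_
      split_ifs <;> simp
    calc E b ≤ ∑ c, ∑ a : Matrix (Fin l) (Fin k) F,
            (if a * b = c then Real.negMulLog (f a) else 0) := by
          rw [hEapp b]
          exact Finset.sum_le_sum fun c _ => step c
      _ = ∑ a : Matrix (Fin l) (Fin k) F, ∑ c,
            (if a * b = c then Real.negMulLog (f a) else 0) := Finset.sum_comm
      _ = ∑ a, Real.negMulLog (f a) := Finset.sum_congr rfl fun a _ =>
          (Finset.sum_eq_single (a * b) (fun x _ hx => if_neg fun h => hx h.symm)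
            (fun h => absurd (Finset.mem_univ _) h)).trans (if_pos rfl)
      _ = SDMM.H p A := hHA.symm
  -- E b = H(A) when b is invertible
  have hEunit : ∀ b : Matrix (Fin k) (Fin k) F, IsUnit b → E b = SDMM.H p A := by
    rintro b ⟨v, rfl⟩
    have hcan1 : ∀ x : Matrix (Fin l) (Fin k) F,
        (x * (↑v⁻¹ : Matrix (Fin k) (Fin k) F)) * (↑v : Matrix (Fin k) (Fin k) F) = x := by
      intro x
      rw [Matrix.mul_assoc, Units.inv_mul, Matrix.mul_one]
    have hcan2 : ∀ x : Matrix (Fin l) (Fin k) F,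
        (x * (↑v : Matrix (Fin k) (Fin k) F)) * (↑v⁻¹ : Matrix (Fin k) (Fin k) F) = x := by
      intro x
      rw [Matrix.mul_assoc, Units.mul_inv, Matrix.mul_one]
    have hSeq : ∀ c, S (↑v) c = f (c * (↑v⁻¹ : Matrix (Fin k) (Fin k) F)) := by
      intro c
      rw [hSapp]
      refine (Finset.sum_eq_single (c * (↑v⁻¹ : Matrix (Fin k) (Fin k) F))
        ?_ ?_).trans ?_
      · intro a _ ha
        exact if_neg fun h => ha (by rw [← h, hcan2 a])
      · intro h; exact absurd (Finset.mem_univ _) h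
      · exact if_pos (hcan1 c)
    have hbij : Function.Bijective
        (fun c : Matrix (Fin l) (Fin k) F =>
          c * (↑v⁻¹ : Matrix (Fin k) (Fin k) F)) := by
      constructor
      · intro x y hxy
        have h2 : (x * (↑v⁻¹ : Matrix (Fin k) (Fin k) F)) * (↑v : Matrix (Fin k) (Fin k) F)
            = (y * (↑v⁻¹ : Matrix (Fin k) (Fin k) F)) * (↑v : Matrix (Fin k) (Fin k) F) :=
          congrArg (fun m : Matrix (Fin l) (Fin k) F =>
            m * (↑v : Matrix (Fin k) (Fin k) F)) hxy
        rwa [hcan1, hcan1] at h2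
      · intro a
        exact ⟨a * (↑v : Matrix (Fin k) (Fin k) F), hcan2 a⟩
    calc E (↑v) = ∑ c, Real.negMulLog
          (f (c * (↑v⁻¹ : Matrix (Fin k) (Fin k) F))) := by
          rw [hEapp]
          exact Finset.sum_congr rfl fun c _ => by rw [hSeq c]
      _ = ∑ a, Real.negMulLog (f a) :=
          Fintype.sum_bijective _ hbij _ _ (fun c => rfl)
      _ = SDMM.H p A := hHA.symm
  -- cardinality of the invertible matrices
  set T : Finset (Matrix (Fin k) (Fin k) F) := Finset.univ.filter (fun b => IsUnit b) with hT
  have hTcard : T.card = ∏ i : Fin k, (q ^ k - q ^ (i : ℕ)) := by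
    have e1 : {m : Matrix (Fin k) (Fin k) F // IsUnit m} ≃ (Matrix (Fin k) (Fin k) F)ˣ :=
      { toFun := fun m => m.2.unit
        invFun := fun x => ⟨x, x.isUnit⟩
        left_inv := fun m => Subtype.ext m.2.unit_spec
        right_inv := fun x => Units.ext (IsUnit.unit_spec _) }
    have h1 : T.card = Fintype.card {m : Matrix (Fin k) (Fin k) F // IsUnit m} := by
      rw [hT]
      exact (Fintype.card_subtype _).symm
    calc T.card = Fintype.card {m : Matrix (Fin k) (Fin k) F // IsUnit m} := h1
      _ = Nat.card {m : Matrix (Fin k) (Fin k) F // IsUnit m} := Nat.card_eq_fintype_card.symm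
      _ = Nat.card (Matrix (Fin k) (Fin k) F)ˣ := Nat.card_congr e1
      _ = Nat.card (GL (Fin k) F) := rfl
      _ = ∏ i : Fin k, (q ^ k - q ^ (i : ℕ)) := by
          rw [hq]
          exact Matrix.card_GL_field _
  have hTsum : (T.card : ℝ) * SDMM.H p A ≤ ∑ b, E b := by
    have h1 : (∑ b ∈ T, E b) = (T.card : ℝ) * SDMM.H p A := by
      calc (∑ b ∈ T, E b) = ∑ _b ∈ T, SDMM.H p A :=
            Finset.sum_congr rfl fun b hb => hEunit b (Finset.mem_filter.1 hb).2
        _ = T.card • SDMM.H p A := Finset.sum_const _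
        _ = (T.card : ℝ) * SDMM.H p A := nsmul_eq_mul _ _
    rw [← h1]
    exact Finset.sum_le_sum_of_subset_of_nonneg (Finset.subset_univ T) fun b _ _ => hE0 b
  -- arithmetic identity
  have hq1 : 1 ≤ q := Fintype.card_pos
  have hqR : (0 : ℝ) < (q : ℝ) := by exact_mod_cast Nat.lt_of_lt_of_le Nat.zero_lt_one hq1
  have hNval : N = q ^ (k * k) := by
    rw [hNdef, hq]
    have e : Matrix (Fin k) (Fin k) F ≃ (Fin k → Fin k → F) := Equiv.refl _
    rw [Fintype.card_congr e, Fintype.card_fun, Fintype.card_fun, Fintype.card_fin,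
      pow_mul]
  have huq : u = ((q : ℝ) ^ k)⁻¹ ^ k := by
    rw [hu, hNval]
    push_cast
    rw [inv_pow, ← pow_mul]
  have harith : u * (T.card : ℝ)
      = ∏ i ∈ Finset.range k, (1 - ((q : ℝ))⁻¹ ^ (i + 1)) := by
    have hcast : (T.card : ℝ) = ∏ i ∈ Finset.range k, ((q : ℝ) ^ k - (q : ℝ) ^ i) := by
      rw [hTcard, Nat.cast_prod,
        ← Fin.prod_univ_eq_prod_range (fun i => ((q : ℝ) ^ k - (q : ℝ) ^ i)) k]
      refine Finset.prod_congr rfl fun i _ => ?_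
      rw [Nat.cast_sub (Nat.pow_le_pow_right hq1 (le_of_lt i.2))]
      push_cast
      ring
    have key : ∀ j ∈ Finset.range k,
        (1 - ((q : ℝ))⁻¹ ^ ((k - 1 - j) + 1)) = ((q : ℝ) ^ k - (q : ℝ) ^ j) * ((q : ℝ) ^ k)⁻¹ := by
      intro j hj
      have hjk : j < k := Finset.mem_range.1 hj
      have h1 : k - 1 - j + 1 = k - j := by omega
      have h2 : ((q : ℝ))⁻¹ ^ (k - j) = (q : ℝ) ^ j * ((q : ℝ) ^ k)⁻¹ := by
        rw [inv_pow, eq_comm, mul_inv_eq_iff_eq_mul₀ (by positivity), inv_mul_eq_div,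
          eq_div_iff (by positivity), ← pow_add]
        congr 1
        omega
      rw [h1, h2]
      field_simp
    calc u * (T.card : ℝ)
        = (∏ i ∈ Finset.range k, ((q : ℝ) ^ k - (q : ℝ) ^ i)) * ((q : ℝ) ^ k)⁻¹ ^ k := by
          rw [hcast, huq]
          ring
      _ = ∏ j ∈ Finset.range k, (((q : ℝ) ^ k - (q : ℝ) ^ j) * ((q : ℝ) ^ k)⁻¹) := by
          rw [Finset.prod_mul_distrib, Finset.prod_const, Finset.card_range]
      _ = ∏ j ∈ Finset.range k, (1 - ((q : ℝ))⁻¹ ^ ((k - 1 - j) + 1)) :=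
          (Finset.prod_congr rfl key).symm
      _ = ∏ i ∈ Finset.range k, (1 - ((q : ℝ))⁻¹ ^ (i + 1)) :=
          Finset.prod_range_reflect (fun i => 1 - ((q : ℝ))⁻¹ ^ (i + 1)) k
  constructor
  · -- lower bound
    rw [hHc, ← harith]
    calc SDMM.H p A * (u * (T.card : ℝ)) = u * ((T.card : ℝ) * SDMM.H p A) := by ring
      _ ≤ u * ∑ b, E b := mul_le_mul_of_nonneg_left hTsum hu0
  · -- upper bound
    rw [hHc]
    have h1 : (∑ b, E b) ≤ (N : ℝ) * SDMM.H p A := by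
      calc (∑ b, E b) ≤ ∑ _b : Matrix (Fin k) (Fin k) F, SDMM.H p A :=
            Finset.sum_le_sum fun b _ => hEle b
        _ = (N : ℝ) * SDMM.H p A := by
            rw [Finset.sum_const, nsmul_eq_mul, Finset.card_univ, ← hNdef]
    calc u * ∑ b, E b ≤ u * ((N : ℝ) * SDMM.H p A) := mul_le_mul_of_nonneg_left h1 hu0
      _ = SDMM.H p A := by
          rw [hu, ← mul_assoc, inv_mul_cancel₀ (by exact_mod_cast hNpos.ne'), one_mul]
end
end

section
/- Let F be a finite field with q elements, and let L, K, M be positive integers with K ≥ M. Let A and B be independent random matrices, A uniformly distributed on F^{L×K} and B uniformly distributed on F^{K×M}. Write A = [A₁ | A₂] where A₁ consists of the first M columns of A and A₂ of the last K − M columns. Then L·M·(log q)·∏_{i=1}^{M}(1 − q^{−i}) ≤ H(AB | B, A₂) ≤ L·M·log q. -/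
open scoped BigOperators Classical

noncomputable section

namespace SDMMaux

open SDMM Finset Real

set_option linter.unusedSectionVars false

section Aux

variable {Ω : Type} {γ δ α β : Type*} [Fintype Ω]

lemma distOf_comp [Fintype γ] (p : Ω → ℝ) (W : Ω → γ) (f : γ → δ) (v : δ) :
    distOf p (fun ω => f (W ω)) v = ∑ c : γ, if f c = v then distOf p W c else 0 := by
  unfold SDMM.distOf
  calc ∑ ω, (if f (W ω) = v then p ω else 0)
      = ∑ ω, ∑ c : γ, if W ω = c then (if f c = v then p ω else 0) else 0 := by
        refine Finset.sum_congr rfl fun ω _ => ?_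
        rw [Finset.sum_ite_eq Finset.univ (W ω)]
        simp
    _ = ∑ c : γ, ∑ ω, if W ω = c then (if f c = v then p ω else 0) else 0 := Finset.sum_comm
    _ = ∑ c : γ, if f c = v then (∑ ω, if W ω = c then p ω else 0) else 0 := by
        refine Finset.sum_congr rfl fun c _ => ?_
        by_cases h : f c = v <;> simp [h]

lemma distOf_comp_uniform [Fintype γ] (p : Ω → ℝ) (W : Ω → γ) (hW : Uniform p W)
    (f : γ → δ) (v : δ) :
    distOf p (fun ω => f (W ω)) v
      = ((Finset.univ.filter fun c : γ => f c = v).card : ℝ) * (Fintype.card γ : ℝ)⁻¹ := by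
  rw [distOf_comp]
  have hW' : ∀ c, distOf p W c = 1 / Fintype.card γ := hW
  simp only [hW']
  rw [Finset.sum_ite, Finset.sum_const, Finset.sum_const_zero, add_zero, nsmul_eq_mul]
  rw [one_div]

lemma uniform_pair [Fintype α] [Fintype β] (p : Ω → ℝ) (X : Ω → α) (Y : Ω → β)
    (hX : Uniform p X) (hY : Uniform p Y) (h : IndepRV p X Y) :
    Uniform p (fun ω => (X ω, Y ω)) := by
  rintro ⟨a, b⟩
  rw [h a b, hX a, hY b, Fintype.card_prod]
  push_cast
  rw [div_mul_div_comm, one_mul]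

lemma sum_distOf [Fintype α] (p : Ω → ℝ) (hp : IsPMF p) (X : Ω → α) :
    ∑ a, distOf p X a = 1 := by
  unfold SDMM.distOf
  rw [Finset.sum_comm]
  simp only [Finset.sum_ite_eq, Finset.mem_univ, if_true]
  exact hp.2

lemma negMulLog_sum_le' {ι : Type*} (s : Finset ι) (f : ι → ℝ) (hf : ∀ i ∈ s, 0 ≤ f i) :
    Real.negMulLog (∑ i ∈ s, f i) ≤ ∑ i ∈ s, Real.negMulLog (f i) := by
  have h1 : Real.negMulLog (∑ i ∈ s, f i)
      = ∑ i ∈ s, (-(f i) * Real.log (∑ j ∈ s, f j)) := by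
    rw [Real.negMulLog, ← Finset.sum_neg_distrib, Finset.sum_mul]
  rw [h1]
  refine Finset.sum_le_sum fun i hi => ?_
  rcases eq_or_lt_of_le (hf i hi) with h0 | h0
  · simp [← h0, Real.negMulLog]
  · rw [Real.negMulLog, neg_mul, neg_mul, neg_le_neg_iff]
    exact mul_le_mul_of_nonneg_left
      (Real.log_le_log h0 (Finset.single_le_sum hf hi)) (hf i hi)

lemma sum_negMulLog_le_card [Fintype α] (f : α → ℝ) (hf : ∀ a, 0 ≤ f a) :
    ∑ a, Real.negMulLog (f a)
      ≤ Real.negMulLog (∑ a, f a) + (∑ a, f a) * Real.log (Fintype.card α) := by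
  set T := ∑ a, f a with hT
  by_cases hT0 : T = 0
  · have hz : ∀ a, f a = 0 := fun a =>
      ((Finset.sum_eq_zero_iff_of_nonneg (fun a _ => hf a)).mp (hT ▸ hT0)) a (Finset.mem_univ a)
    rw [hT0]
    simp [hz]
  · have hTpos : 0 < T := lt_of_le_of_ne (Finset.sum_nonneg fun a _ => hf a) (Ne.symm hT0)
    have hne : Nonempty α := by
      by_contra hne
      rw [not_nonempty_iff] at hne
      exact hT0 (by simp [hT])
    set n : ℝ := (Fintype.card α : ℝ) with hn
    have hnpos : 0 < n := by
      have := Fintype.card_pos (α := α)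
      positivity
    have key : ∀ a, Real.negMulLog (f a) ≤ T / n - f a + f a * Real.log n - f a * Real.log T := by
      intro a
      rcases eq_or_lt_of_le (hf a) with h0 | h0
      · rw [← h0]
        simp only [Real.negMulLog_zero, mul_zero, zero_mul, sub_zero, add_zero, zero_sub]
        have : 0 ≤ T / n := by positivity
        simpa using this
      · have hlog : Real.log (T / (n * f a)) ≤ T / (n * f a) - 1 :=
          Real.log_le_sub_one_of_pos (by positivity)
        have hmul := mul_le_mul_of_nonneg_left hlog (le_of_lt h0)
        have e1 : f a * (T / (n * f a)) = T / n := by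
          field_simp
        have e2 : Real.log (T / (n * f a)) = Real.log T - (Real.log n + Real.log (f a)) := by
          rw [Real.log_div (ne_of_gt hTpos) (by positivity),
            Real.log_mul (ne_of_gt hnpos) (ne_of_gt h0)]
        rw [e2, mul_sub, mul_sub, e1, mul_add] at hmul
        rw [Real.negMulLog, neg_mul]
        linarith
    calc ∑ a, Real.negMulLog (f a)
        ≤ ∑ a, (T / n - f a + f a * Real.log n - f a * Real.log T) :=
          Finset.sum_le_sum fun a _ => key a
      _ = Real.negMulLog T + T * Real.log n := by
          rw [Real.negMulLog]
          simp only [Finset.sum_sub_distrib, Finset.sum_add_distrib, Finset.sum_const,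
            ← Finset.sum_mul, ← hT]
          rw [Finset.card_univ, nsmul_eq_mul]
          have : (Fintype.card α : ℝ) * (T / n) = T := by
            rw [hn]; field_simp
          rw [this]
          ring

lemma bracket_const [Fintype α] [Nonempty α] {u : ℝ} (hu : 0 < u) :
    (∑ _a : α, Real.negMulLog u) - Real.negMulLog ((Fintype.card α : ℝ) * u)
      = (Fintype.card α : ℝ) * u * Real.log (Fintype.card α) := by
  have hn : (0:ℝ) < (Fintype.card α : ℝ) := by
    have := Fintype.card_pos (α := α); positivity
  rw [Finset.sum_const, Finset.card_univ, nsmul_eq_mul, Real.negMulLog, Real.negMulLog,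
    Real.log_mul (ne_of_gt hn) (ne_of_gt hu)]
  ring

end Aux

section Cards

lemma card_mat (F : Type) [Fintype F] (m n : ℕ) :
    Fintype.card (Matrix (Fin m) (Fin n) F) = (Fintype.card F) ^ (m * n) := by
  rw [Fintype.card_congr (Matrix.of (m := Fin m) (n := Fin n) (α := F)).symm]
  rw [Fintype.card_fun, Fintype.card_fun, Fintype.card_fin, Fintype.card_fin, ← pow_mul,
    mul_comm]

def unitsEquivIsUnit (R : Type*) [Monoid R] : Rˣ ≃ {x : R // IsUnit x} where
  toFun u := ⟨u, u.isUnit⟩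
  invFun x := x.2.unit
  left_inv u := Units.ext u.isUnit.unit_spec
  right_inv x := Subtype.ext x.2.unit_spec

lemma card_isUnit (R : Type*) [Monoid R] :
    Nat.card {x : R // IsUnit x} = Nat.card Rˣ :=
  Nat.card_congr (unitsEquivIsUnit R).symm

lemma card_GLM (F : Type) [Field F] [Fintype F] (M : ℕ) :
    Nat.card (Matrix (Fin M) (Fin M) F)ˣ
      = ∏ i : Fin M, ((Fintype.card F) ^ M - (Fintype.card F) ^ (i : ℕ)) :=
  Matrix.card_GL_field M

lemma count_ratio (q L K M : ℕ) (hq : 1 < q) (hMK : M ≤ K) :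
    ((∏ i : Fin M, (q ^ M - q ^ (i : ℕ)) : ℕ) : ℝ) * (q : ℝ) ^ ((K - M) * M)
        * (q : ℝ) ^ (L * (K - M)) * (q : ℝ) ^ (L * M)
        * ((q : ℝ) ^ (L * K) * (q : ℝ) ^ (K * M))⁻¹
      = ∏ i ∈ Finset.range M, (1 - ((q : ℝ))⁻¹ ^ (i + 1)) := by
  have hq0 : (0 : ℝ) < q := by positivity
  have hqne : (q : ℝ) ≠ 0 := ne_of_gt hq0
  have hcast : ((∏ i : Fin M, (q ^ M - q ^ (i : ℕ)) : ℕ) : ℝ)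
      = (q : ℝ) ^ (M * M) * ∏ i ∈ Finset.range M, (1 - ((q : ℝ))⁻¹ ^ (i + 1)) := by
    rw [Fin.prod_univ_eq_prod_range (fun i => q ^ M - q ^ i) M, Nat.cast_prod]
    have step : ∀ i ∈ Finset.range M, ((q ^ M - q ^ i : ℕ) : ℝ)
        = (q : ℝ) ^ M - (q : ℝ) ^ i := by
      intro i hi
      rw [Nat.cast_sub (Nat.pow_le_pow_right (le_of_lt hq) (le_of_lt (Finset.mem_range.mp hi)))]
      push_cast
      ring
    rw [Finset.prod_congr rfl step]
    rw [← Finset.prod_range_reflect (fun i => (q : ℝ) ^ M - (q : ℝ) ^ i) M]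
    have hMM : (q : ℝ) ^ (M * M) = ∏ _i ∈ Finset.range M, (q : ℝ) ^ M := by
      rw [Finset.prod_const, Finset.card_range, ← pow_mul]
    rw [hMM, ← Finset.prod_mul_distrib]
    refine Finset.prod_congr rfl fun i hi => ?_
    have hiM : i + 1 ≤ M := Finset.mem_range.mp hi
    have hexp : (q : ℝ) ^ (M - 1 - i) = (q : ℝ) ^ M * ((q : ℝ)⁻¹) ^ (i + 1) := by
      rw [inv_pow, ← pow_sub₀ (q : ℝ) hqne hiM]
      congr 1
      omega
    rw [mul_one_sub, ← hexp]
  rw [hcast]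
  have e1 : (K - M) * M + M * M = K * M := by rw [← Nat.add_mul, Nat.sub_add_cancel hMK]
  have e2 : L * (K - M) + L * M = L * K := by rw [← Nat.mul_add, Nat.sub_add_cancel hMK]
  have f1 : (q : ℝ) ^ (K * M) = (q : ℝ) ^ ((K - M) * M) * (q : ℝ) ^ (M * M) := by
    rw [← pow_add, e1]
  have f2 : (q : ℝ) ^ (L * K) = (q : ℝ) ^ (L * (K - M)) * (q : ℝ) ^ (L * M) := by
    rw [← pow_add, e2]
  rw [f1, f2]
  have h1 : (q : ℝ) ^ ((K - M) * M) ≠ 0 := by positivity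
  have h2 : (q : ℝ) ^ (M * M) ≠ 0 := by positivity
  have h3 : (q : ℝ) ^ (L * (K - M)) ≠ 0 := by positivity
  have h4 : (q : ℝ) ^ (L * M) ≠ 0 := by positivity
  field_simp

lemma final_eq (q L K M : ℕ) (hq : 1 < q) (hMK : M ≤ K) :
    (L * M : ℝ) * Real.log q * (∏ i ∈ Finset.range M, (1 - ((q : ℝ))⁻¹ ^ (i + 1)))
      = (((∏ i : Fin M, (q ^ M - q ^ (i : ℕ))) * q ^ ((K - M) * M) * q ^ (L * (K - M)) : ℕ) : ℝ)
        * (((q ^ (L * M) : ℕ) : ℝ)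
            * (((q ^ (L * K) * q ^ (K * M) : ℕ) : ℝ))⁻¹
            * Real.log ((q ^ (L * M) : ℕ) : ℝ)) := by
  have key := count_ratio q L K M hq hMK
  simp only [Nat.cast_mul, Nat.cast_pow]
  rw [Real.log_pow]
  rw [← key]
  push_cast
  ring

end Cards

section Split

variable {F : Type} [Field F] [Fintype F] {L K M : ℕ}

/-- index splitting equivalence -/
def pe (hMK : M ≤ K) : Fin M ⊕ Fin (K - M) ≃ Fin K :=
  finSumFinEquiv.trans (finCongr (Nat.add_sub_cancel' hMK))

def hd (hMK : M ≤ K) (a : Matrix (Fin L) (Fin K) F) : Matrix (Fin L) (Fin M) F :=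
  a.submatrix id (pe hMK ∘ Sum.inl)

def tl (hMK : M ≤ K) (a : Matrix (Fin L) (Fin K) F) : Matrix (Fin L) (Fin (K - M)) F :=
  a.submatrix id (pe hMK ∘ Sum.inr)

def r1 (hMK : M ≤ K) (b : Matrix (Fin K) (Fin M) F) : Matrix (Fin M) (Fin M) F :=
  b.submatrix (pe hMK ∘ Sum.inl) id

def r2 (hMK : M ≤ K) (b : Matrix (Fin K) (Fin M) F) : Matrix (Fin (K - M)) (Fin M) F :=
  b.submatrix (pe hMK ∘ Sum.inr) id

lemma mul_split (hMK : M ≤ K) (a : Matrix (Fin L) (Fin K) F) (b : Matrix (Fin K) (Fin M) F) :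
    a * b = hd hMK a * r1 hMK b + tl hMK a * r2 hMK b := by
  have h1 : a.submatrix id (pe hMK) = Matrix.fromCols (hd hMK a) (tl hMK a) := by
    ext i j
    cases j <;> simp [Matrix.fromCols, hd, tl]
  have h2 : b.submatrix (pe hMK) id = Matrix.fromRows (r1 hMK b) (r2 hMK b) := by
    ext i j
    cases i <;> simp [Matrix.fromRows_apply_inl, Matrix.fromRows_apply_inr, r1, r2]
  calc a * b = (a.submatrix id (pe hMK)) * (b.submatrix (pe hMK) id) := by
        rw [Matrix.submatrix_mul_equiv, Matrix.submatrix_id_id]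
    _ = _ := by rw [h1, h2, Matrix.fromCols_mul_fromRows]

lemma hd_tl_inj (hMK : M ≤ K) (a a' : Matrix (Fin L) (Fin K) F)
    (h1 : hd hMK a = hd hMK a') (h2 : tl hMK a = tl hMK a') : a = a' := by
  ext i k
  obtain ⟨s, rfl⟩ : ∃ s, pe hMK s = k := ⟨(pe hMK).symm k, (pe hMK).apply_symm_apply k⟩
  cases s with
  | inl j =>
    have := congrFun (congrFun h1 i) j
    simpa [hd] using this
  | inr j =>
    have := congrFun (congrFun h2 i) j
    simpa [tl] using this

/-- splitting the rows of a `K × M` matrix -/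
def rowsEquiv (hMK : M ≤ K) :
    Matrix (Fin K) (Fin M) F ≃ Matrix (Fin M) (Fin M) F × Matrix (Fin (K - M)) (Fin M) F where
  toFun b := (r1 hMK b, r2 hMK b)
  invFun x := (Matrix.fromRows x.1 x.2).submatrix (pe hMK).symm id
  left_inv b := by
    ext i j
    obtain ⟨s, rfl⟩ : ∃ s, pe hMK s = i := ⟨(pe hMK).symm i, (pe hMK).apply_symm_apply i⟩
    cases s <;> simp [r1, r2, Matrix.fromRows_apply_inl, Matrix.fromRows_apply_inr]
  right_inv x := by
    obtain ⟨x1, x2⟩ := x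
    refine Prod.ext ?_ ?_ <;> ext i j <;> simp [r1, r2, Matrix.fromRows_apply_inl, Matrix.fromRows_apply_inr]

lemma count_good (hMK : M ≤ K) (b : Matrix (Fin K) (Fin M) F) (hb : IsUnit (r1 hMK b))
    (a₂ : Matrix (Fin L) (Fin (K - M)) F) (x : Matrix (Fin L) (Fin M) F) :
    (Finset.univ.filter fun c : Matrix (Fin L) (Fin K) F × Matrix (Fin K) (Fin M) F =>
        c.1 * c.2 = x ∧ (c.2, tl hMK c.1) = (b, a₂)).card = 1 := by
  haveI := (r1 hMK b).invertibleOfIsUnitDet ((Matrix.isUnit_iff_isUnit_det _).mp hb)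
  set astar : Matrix (Fin L) (Fin K) F :=
    (Matrix.fromCols ((x - a₂ * r2 hMK b) * (r1 hMK b)⁻¹) a₂).submatrix id (pe hMK).symm
    with hastar
  have hhd : hd hMK astar = (x - a₂ * r2 hMK b) * (r1 hMK b)⁻¹ := by
    ext i j; simp [hd, hastar, Matrix.fromCols]
  have htl : tl hMK astar = a₂ := by
    ext i j; simp [tl, hastar, Matrix.fromCols]
  rw [Finset.card_eq_one]
  refine ⟨(astar, b), ?_⟩
  ext c
  simp only [Finset.mem_filter, Finset.mem_univ, true_and, Finset.mem_singleton]
  constructor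
  · rintro ⟨hg, hh⟩
    obtain ⟨c1, c2⟩ := c
    simp only [Prod.mk.injEq] at hg hh ⊢
    obtain ⟨hb2, htl2⟩ := hh
    subst hb2
    have hkey : hd hMK c1 * r1 hMK c2 = x - a₂ * r2 hMK c2 := by
      rw [← hg, mul_split hMK c1 c2, htl2, add_sub_cancel_right]
    have hhd1 : hd hMK c1 = (x - a₂ * r2 hMK c2) * (r1 hMK c2)⁻¹ := by
      rw [← hkey, Matrix.mul_inv_cancel_right_of_invertible]
    exact ⟨hd_tl_inj hMK c1 astar (by rw [hhd1, hhd]) (by rw [htl2, htl]), rfl⟩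
  · rintro rfl
    refine ⟨?_, by rw [htl]⟩
    rw [mul_split hMK astar b, hhd, htl, Matrix.inv_mul_cancel_right_of_invertible,
      sub_add_cancel]

set_option maxHeartbeats 1000000 in
lemma card_filter_isUnit_r1 (hMK : M ≤ K) :
    (Finset.univ.filter fun b : Matrix (Fin K) (Fin M) F => IsUnit (r1 hMK b)).card
      = Nat.card (Matrix (Fin M) (Fin M) F)ˣ * (Fintype.card F) ^ ((K - M) * M) := by
  have e : {b : Matrix (Fin K) (Fin M) F // IsUnit (r1 hMK b)}
      ≃ {x : Matrix (Fin M) (Fin M) F // IsUnit x} × Matrix (Fin (K - M)) (Fin M) F :=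
    ((rowsEquiv hMK).subtypeEquiv (fun b => Iff.rfl)).trans
      Equiv.prodSubtypeFstEquivSubtypeProd
  calc (Finset.univ.filter fun b : Matrix (Fin K) (Fin M) F => IsUnit (r1 hMK b)).card
      = Nat.card {b : Matrix (Fin K) (Fin M) F // IsUnit (r1 hMK b)} :=
        (Nat.card_eq_fintype_card.trans (Fintype.card_subtype _)).symm
    _ = Nat.card ({x : Matrix (Fin M) (Fin M) F // IsUnit x}
          × Matrix (Fin (K - M)) (Fin M) F) := Nat.card_congr e
    _ = Nat.card {x : Matrix (Fin M) (Fin M) F // IsUnit x}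
          * Nat.card (Matrix (Fin (K - M)) (Fin M) F) := Nat.card_prod _ _
    _ = Nat.card (Matrix (Fin M) (Fin M) F)ˣ * (Fintype.card F) ^ ((K - M) * M) := by
        rw [card_isUnit]
        congr 1
        rw [Nat.card_eq_fintype_card, card_mat]

/-- joint count -/
def Nxy (hMK : M ≤ K) (x : Matrix (Fin L) (Fin M) F)
    (y : Matrix (Fin K) (Fin M) F × Matrix (Fin L) (Fin (K - M)) F) : ℕ :=
  (Finset.univ.filter fun c : Matrix (Fin L) (Fin K) F × Matrix (Fin K) (Fin M) F =>
    c.1 * c.2 = x ∧ (c.2, tl hMK c.1) = y).card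

/-- marginal count -/
def Ny (hMK : M ≤ K) (L : ℕ)
    (y : Matrix (Fin K) (Fin M) F × Matrix (Fin L) (Fin (K - M)) F) : ℕ :=
  (Finset.univ.filter fun c : Matrix (Fin L) (Fin K) F × Matrix (Fin K) (Fin M) F =>
    (c.2, tl hMK c.1) = y).card

lemma fiber (hMK : M ≤ K)
    (y : Matrix (Fin K) (Fin M) F × Matrix (Fin L) (Fin (K - M)) F) :
    ∑ x : Matrix (Fin L) (Fin M) F, Nxy hMK x y = Ny hMK L y := by
  unfold Nxy Ny
  simp only [Finset.card_filter]
  rw [Finset.sum_comm]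
  refine Finset.sum_congr rfl fun c _ => ?_
  by_cases hc : (c.2, tl hMK c.1) = y
  · simp [hc]
  · simp [hc]

lemma card_pair_filter (hMK : M ≤ K)
    (v : Matrix (Fin L) (Fin M) F
        × (Matrix (Fin K) (Fin M) F × Matrix (Fin L) (Fin (K - M)) F)) :
    (Finset.univ.filter fun c : Matrix (Fin L) (Fin K) F × Matrix (Fin K) (Fin M) F =>
        (c.1 * c.2, (c.2, tl hMK c.1)) = v).card = Nxy hMK v.1 v.2 := by
  unfold Nxy
  congr 1
  ext c
  simp [Prod.ext_iff]

lemma Nxy_good (hMK : M ≤ K) (b : Matrix (Fin K) (Fin M) F) (hb : IsUnit (r1 hMK b))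
    (a₂ : Matrix (Fin L) (Fin (K - M)) F) (x : Matrix (Fin L) (Fin M) F) :
    Nxy hMK x (b, a₂) = 1 :=
  count_good hMK b hb a₂ x

lemma Ny_good (hMK : M ≤ K) (b : Matrix (Fin K) (Fin M) F) (hb : IsUnit (r1 hMK b))
    (a₂ : Matrix (Fin L) (Fin (K - M)) F) :
    Ny hMK L (b, a₂) = Fintype.card (Matrix (Fin L) (Fin M) F) := by
  rw [← fiber hMK (b, a₂)]
  rw [Finset.sum_congr rfl fun x _ => Nxy_good hMK b hb a₂ x]
  simp

end Split

end SDMMaux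
open SDMMaux SDMM Finset Real

/-- **Lemma 6 (`H(AB | B, A₂)`).**
Over a finite field `F` with `q` elements, with `K ≥ M`, let `A`, `B` be
independent uniformly random matrices over `F^{L×K}`, `F^{K×M}`, and let
`A₂` consist of the last `K - M` columns of `A`.  Then
`L·M·(log q)·∏_{i=1}^{M}(1 - q^{-i}) ≤ H(AB | B, A₂) ≤ L·M·log q`. -/
theorem cond_entropy_product_given_right_and_tail_columns
    (L K M : ℕ) (hL : 0 < L) (hK : 0 < K) (hM : 0 < M) (hMK : M ≤ K)
    (F : Type) [Field F] [Fintype F]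
    (Ω : Type) [Fintype Ω] (p : Ω → ℝ) (hp : SDMM.IsPMF p)
    (A : Ω → Matrix (Fin L) (Fin K) F) (B : Ω → Matrix (Fin K) (Fin M) F)
    (hA : SDMM.Uniform p A) (hB : SDMM.Uniform p B) (hAB : SDMM.IndepRV p A B)
    (A₂ : Ω → Matrix (Fin L) (Fin (K - M)) F)
    (hA₂ : ∀ ω i (j : Fin (K - M)), A₂ ω i j = A ω i ⟨M + j, by have := j.2; omega⟩) :
    (L * M : ℝ) * Real.log (Fintype.card F) *
        (∏ i ∈ Finset.range M, (1 - ((Fintype.card F : ℝ))⁻¹ ^ (i + 1))) ≤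
      SDMM.Hc p (fun ω => A ω * B ω) (fun ω => (B ω, A₂ ω)) ∧
    SDMM.Hc p (fun ω => A ω * B ω) (fun ω => (B ω, A₂ ω)) ≤
      (L * M : ℝ) * Real.log (Fintype.card F) := by
  classical
  have hq1 : 1 < Fintype.card F := Fintype.one_lt_card
  have hγpos : 0 < Fintype.card (Matrix (Fin L) (Fin K) F × Matrix (Fin K) (Fin M) F) :=
    Fintype.card_pos
  set u : ℝ := ((Fintype.card (Matrix (Fin L) (Fin K) F × Matrix (Fin K) (Fin M) F) : ℝ))⁻¹
    with hu
  have hu0 : 0 < u := by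
    rw [hu]
    exact inv_pos.mpr (by exact_mod_cast hγpos)
  have hWu : SDMM.Uniform p (fun ω => (A ω, B ω)) := uniform_pair p A B hA hB hAB
  have A2eq : ∀ ω, A₂ ω = tl hMK (A ω) := by
    intro ω
    ext i j
    rw [hA₂]
    show A ω i _ = A ω i (pe hMK (Sum.inr j))
    refine congrArg (A ω i) (Fin.ext ?_)
    simp [pe]
  have hdistY : ∀ y : Matrix (Fin K) (Fin M) F × Matrix (Fin L) (Fin (K - M)) F,
      SDMM.distOf p (fun ω => (B ω, A₂ ω)) y = (Ny hMK L y : ℝ) * u := by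
    intro y
    have hfun : (fun ω => (B ω, A₂ ω))
        = fun ω => ((fun c : Matrix (Fin L) (Fin K) F × Matrix (Fin K) (Fin M) F =>
            (c.2, tl hMK c.1)) ((fun ω => (A ω, B ω)) ω)) := by
      funext ω
      show (B ω, A₂ ω) = (B ω, tl hMK (A ω))
      rw [A2eq ω]
    rw [hfun]
    have base := distOf_comp_uniform p (fun ω => (A ω, B ω)) hWu
      (fun c : Matrix (Fin L) (Fin K) F × Matrix (Fin K) (Fin M) F =>
        (c.2, tl hMK c.1)) y
    beta_reduce at base
    rw [Finset.filter_congr_decidable] at base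
    exact base
  have hdistZ : ∀ v : Matrix (Fin L) (Fin M) F ×
      (Matrix (Fin K) (Fin M) F × Matrix (Fin L) (Fin (K - M)) F),
      SDMM.distOf p (fun ω => (A ω * B ω, (B ω, A₂ ω))) v = (Nxy hMK v.1 v.2 : ℝ) * u := by
    intro v
    have hfun : (fun ω => (A ω * B ω, (B ω, A₂ ω)))
        = fun ω => ((fun c : Matrix (Fin L) (Fin K) F × Matrix (Fin K) (Fin M) F =>
            (c.1 * c.2, (c.2, tl hMK c.1))) ((fun ω => (A ω, B ω)) ω)) := by
      funext ω
      show (A ω * B ω, (B ω, A₂ ω)) = (A ω * B ω, (B ω, tl hMK (A ω)))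
      rw [A2eq ω]
    rw [hfun]
    have base := distOf_comp_uniform p (fun ω => (A ω, B ω)) hWu
      (fun c : Matrix (Fin L) (Fin K) F × Matrix (Fin K) (Fin M) F =>
        (c.1 * c.2, (c.2, tl hMK c.1))) v
    beta_reduce at base
    rw [Finset.filter_congr_decidable] at base
    rw [card_pair_filter hMK v] at base
    exact base
  have HYeq : SDMM.H p (fun ω => (B ω, A₂ ω))
      = ∑ y : Matrix (Fin K) (Fin M) F × Matrix (Fin L) (Fin (K - M)) F,
        Real.negMulLog ((Ny hMK L y : ℝ) * u) := by
    unfold SDMM.H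
    exact Finset.sum_congr rfl fun y _ => by rw [hdistY y]
  have HZeq : SDMM.H p (fun ω => (A ω * B ω, (B ω, A₂ ω)))
      = ∑ y : Matrix (Fin K) (Fin M) F × Matrix (Fin L) (Fin (K - M)) F,
        ∑ x : Matrix (Fin L) (Fin M) F, Real.negMulLog ((Nxy hMK x y : ℝ) * u) := by
    unfold SDMM.H
    rw [Fintype.sum_prod_type, Finset.sum_comm]
    exact Finset.sum_congr rfl fun y _ => Finset.sum_congr rfl fun x _ => by
      rw [hdistZ (x, y)]
  have hHc : SDMM.Hc p (fun ω => A ω * B ω) (fun ω => (B ω, A₂ ω))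
      = ∑ y : Matrix (Fin K) (Fin M) F × Matrix (Fin L) (Fin (K - M)) F,
          ((∑ x : Matrix (Fin L) (Fin M) F, Real.negMulLog ((Nxy hMK x y : ℝ) * u))
          - Real.negMulLog ((Ny hMK L y : ℝ) * u)) := by
    have h0 : SDMM.Hc p (fun ω => A ω * B ω) (fun ω => (B ω, A₂ ω))
        = SDMM.H p (fun ω => (A ω * B ω, (B ω, A₂ ω)))
          - SDMM.H p (fun ω => (B ω, A₂ ω)) := rfl
    rw [h0, HZeq, HYeq, ← Finset.sum_sub_distrib]
  have hfibR : ∀ y, (Ny hMK L y : ℝ) * u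
      = ∑ x : Matrix (Fin L) (Fin M) F, (Nxy hMK x y : ℝ) * u := by
    intro y
    rw [← fiber hMK y, Nat.cast_sum, Finset.sum_mul]
  have hbr0 : ∀ y, 0 ≤ (∑ x : Matrix (Fin L) (Fin M) F,
        Real.negMulLog ((Nxy hMK x y : ℝ) * u))
      - Real.negMulLog ((Ny hMK L y : ℝ) * u) := by
    intro y
    rw [sub_nonneg, hfibR y]
    exact negMulLog_sum_le' _ _ fun x _ => by positivity
  have hcardα : Fintype.card (Matrix (Fin L) (Fin M) F) = Fintype.card F ^ (L * M) :=
    card_mat F L M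
  have hsum1 : ∑ y : Matrix (Fin K) (Fin M) F × Matrix (Fin L) (Fin (K - M)) F,
      (Ny hMK L y : ℝ) * u = 1 := by
    rw [Finset.sum_congr rfl fun y _ => (hdistY y).symm]
    exact sum_distOf p hp _
  constructor
  · -- lower bound
    rw [hHc]
    have hstep1 : ∑ y ∈ (Finset.univ.filter
          fun y : Matrix (Fin K) (Fin M) F × Matrix (Fin L) (Fin (K - M)) F =>
            IsUnit (r1 hMK y.1)),
        ((∑ x, Real.negMulLog ((Nxy hMK x y : ℝ) * u))
          - Real.negMulLog ((Ny hMK L y : ℝ) * u))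
        ≤ ∑ y, ((∑ x, Real.negMulLog ((Nxy hMK x y : ℝ) * u))
          - Real.negMulLog ((Ny hMK L y : ℝ) * u)) :=
      Finset.sum_le_sum_of_subset_of_nonneg (Finset.subset_univ _) fun y _ _ => hbr0 y
    refine le_trans (le_of_eq ?_) hstep1
    have hval : ∀ y ∈ (Finset.univ.filter
          fun y : Matrix (Fin K) (Fin M) F × Matrix (Fin L) (Fin (K - M)) F =>
            IsUnit (r1 hMK y.1)),
        (∑ x, Real.negMulLog ((Nxy hMK x y : ℝ) * u))
          - Real.negMulLog ((Ny hMK L y : ℝ) * u)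
        = (Fintype.card (Matrix (Fin L) (Fin M) F) : ℝ) * u
            * Real.log (Fintype.card (Matrix (Fin L) (Fin M) F)) := by
      rintro ⟨b, a₂⟩ hy
      have hb : IsUnit (r1 hMK b) := (Finset.mem_filter.mp hy).2
      haveI : Nonempty (Matrix (Fin L) (Fin M) F) := ⟨0⟩
      have hsum : ∑ x, Real.negMulLog ((Nxy hMK x (b, a₂) : ℝ) * u)
          = ∑ _x : Matrix (Fin L) (Fin M) F, Real.negMulLog u :=
        Finset.sum_congr rfl fun x _ => by rw [Nxy_good hMK b hb a₂ x, Nat.cast_one, one_mul]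
      rw [hsum, Ny_good hMK b hb a₂]
      exact bracket_const hu0
    rw [Finset.sum_congr rfl hval, Finset.sum_const, nsmul_eq_mul]
    have hGcard : (Finset.univ.filter
          fun y : Matrix (Fin K) (Fin M) F × Matrix (Fin L) (Fin (K - M)) F =>
            IsUnit (r1 hMK y.1)).card
        = (Nat.card (Matrix (Fin M) (Fin M) F)ˣ * Fintype.card F ^ ((K - M) * M))
            * Fintype.card F ^ (L * (K - M)) := by
      have hGeq : (Finset.univ.filter
            fun y : Matrix (Fin K) (Fin M) F × Matrix (Fin L) (Fin (K - M)) F =>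
              IsUnit (r1 hMK y.1))
          = (Finset.univ.filter fun b : Matrix (Fin K) (Fin M) F => IsUnit (r1 hMK b))
              ×ˢ (Finset.univ : Finset (Matrix (Fin L) (Fin (K - M)) F)) := by
        ext ⟨b, a₂⟩
        simp [Finset.mem_product]
      rw [hGeq, Finset.card_product, card_filter_isUnit_r1 hMK, Finset.card_univ, card_mat]
    rw [hGcard, hcardα, card_GLM, hu, Fintype.card_prod, card_mat F L K, card_mat F K M]
    exact final_eq (Fintype.card F) L K M hq1 hMK
  · -- upper bound
    rw [hHc]
    calc ∑ y, ((∑ x, Real.negMulLog ((Nxy hMK x y : ℝ) * u))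
          - Real.negMulLog ((Ny hMK L y : ℝ) * u))
        ≤ ∑ y, ((Ny hMK L y : ℝ) * u)
            * Real.log (Fintype.card (Matrix (Fin L) (Fin M) F)) := by
          refine Finset.sum_le_sum fun y _ => ?_
          have h6 := sum_negMulLog_le_card (fun x => (Nxy hMK x y : ℝ) * u)
            (fun x => by positivity)
          rw [← hfibR y] at h6
          linarith
      _ = (∑ y, (Ny hMK L y : ℝ) * u)
            * Real.log (Fintype.card (Matrix (Fin L) (Fin M) F)) := by
          rw [Finset.sum_mul]
      _ = Real.log (Fintype.card (Matrix (Fin L) (Fin M) F)) := by rw [hsum1, one_mul]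
      _ = (L * M : ℝ) * Real.log (Fintype.card F) := by
          rw [hcardα, Nat.cast_pow, Real.log_pow]
          push_cast
          ring
end
end

section
/- Fix positive integers L, K, M with K < M and K < L. For every ε > 0 there exists q₀ such that for every finite field F with |F| = q ≥ q₀ the following holds: if A and B are independent random matrices, with A uniformly distributed on F^{L×K} and B uniformly distributed on F^{K×M}, and B₁ denotes the K×K matrix formed by the first K columns of B, then |H(AB | B₁)/log q − (L·K + K·(M − K))| < ε. -/
open scoped BigOperators Classical

noncomputable section

namespace SDMMAux
open SDMM Finset Real

variable {Ω : Type} [Fintype Ω] {α β : Type*}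

lemma distOf_nonneg (p : Ω → ℝ) (hp : IsPMF p) (X : Ω → α) (a : α) : 0 ≤ distOf p X a :=
  Finset.sum_nonneg fun ω _ => by by_cases h : X ω = a <;> simp [h, hp.1 ω]

lemma distOf_comp [Fintype α] (p : Ω → ℝ) (X : Ω → α) (f : α → β) (b : β) :
    distOf p (fun ω => f (X ω)) b
      = ∑ a ∈ Finset.univ.filter (fun a => f a = b), distOf p X a := by
  classical
  rw [Finset.sum_filter]
  unfold distOf
  have : ∀ a : α, (if f a = b then ∑ ω : Ω, if X ω = a then p ω else 0 else 0)
      = ∑ ω : Ω, if X ω = a then (if f (X ω) = b then p ω else 0) else 0 := by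
    intro a
    split_ifs with h
    · refine Finset.sum_congr rfl fun ω _ => ?_
      by_cases hx : X ω = a <;> simp [hx, h]
    · symm
      refine Finset.sum_eq_zero fun ω _ => ?_
      by_cases hx : X ω = a <;> simp [hx, h]
  simp_rw [this]
  rw [Finset.sum_comm]
  refine Finset.sum_congr rfl fun ω _ => ?_
  simp [Finset.sum_ite_eq]

lemma sum_distOf [Fintype α] (p : Ω → ℝ) (hp : IsPMF p) (X : Ω → α) :
    ∑ a : α, distOf p X a = 1 := by
  classical
  unfold distOf
  rw [Finset.sum_comm]
  rw [← hp.2]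
  refine Finset.sum_congr rfl fun ω _ => ?_
  simp [Finset.sum_ite_eq]

lemma negMulLog_sum_le {s : Finset α} {d : α → ℝ} (hd : ∀ a ∈ s, 0 ≤ d a) :
    Real.negMulLog (∑ a ∈ s, d a) ≤ ∑ a ∈ s, Real.negMulLog (d a) := by
  have hT : (0:ℝ) ≤ ∑ a ∈ s, d a := Finset.sum_nonneg hd
  have : Real.negMulLog (∑ a ∈ s, d a) = ∑ a ∈ s, -(d a * Real.log (∑ b ∈ s, d b)) := by
    rw [Real.negMulLog, neg_mul, Finset.sum_mul]
    rw [← Finset.sum_neg_distrib]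
  rw [this]
  refine Finset.sum_le_sum fun a ha => ?_
  rcases eq_or_lt_of_le (hd a ha) with h0 | h0
  · simp [← h0, Real.negMulLog]
  · have hle : d a ≤ ∑ b ∈ s, d b := Finset.single_le_sum hd ha
    have : Real.log (d a) ≤ Real.log (∑ b ∈ s, d b) := Real.log_le_log h0 hle
    rw [Real.negMulLog, neg_mul]
    nlinarith [this, h0]

lemma sum_negMulLog_le_of_card {s : Finset α} {d : α → ℝ} (hd : ∀ a ∈ s, 0 ≤ d a)
    {n : ℝ} (hn : (s.card : ℝ) ≤ n) (hn1 : 1 ≤ n) :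
    ∑ a ∈ s, Real.negMulLog (d a) ≤
      Real.negMulLog (∑ a ∈ s, d a) + (∑ a ∈ s, d a) * Real.log n := by
  classical
  set q : ℝ := ∑ a ∈ s, d a with hq
  have hq0 : 0 ≤ q := Finset.sum_nonneg hd
  set s' : Finset α := s.filter (fun a => d a ≠ 0) with hs'
  have hsub : s' ⊆ s := Finset.filter_subset _ _
  have hqs' : q = ∑ a ∈ s', d a := (Finset.sum_filter_ne_zero s).symm
  have hsum_eq : ∑ a ∈ s, Real.negMulLog (d a) = ∑ a ∈ s', Real.negMulLog (d a) := by
    rw [hs', Finset.sum_filter_of_ne]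
    intro a ha h
    intro h0
    rw [h0] at h
    simp [Real.negMulLog] at h
  rcases eq_or_lt_of_le hq0 with h0 | hqpos
  · rw [show q = (0:ℝ) from h0.symm] at hqs' ⊢
    simp only [zero_mul, add_zero]
    have : ∀ a ∈ s, d a = 0 := by
      intro a ha
      have := (Finset.sum_eq_zero_iff_of_nonneg hd).mp h0.symm
      exact this a ha
    calc ∑ a ∈ s, Real.negMulLog (d a) = 0 := by
          refine Finset.sum_eq_zero fun a ha => ?_; simp [this a ha, Real.negMulLog]
      _ ≤ _ := by simp [Real.negMulLog]
  · have hdpos : ∀ a ∈ s', 0 < d a := by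
      intro a ha
      rcases Finset.mem_filter.mp ha with ⟨has, hne⟩
      exact lt_of_le_of_ne (hd a has) (Ne.symm hne)
    have hn0 : (0:ℝ) < n := lt_of_lt_of_le zero_lt_one hn1
    have key : ∀ a ∈ s', d a * Real.log q - d a * Real.log n + Real.negMulLog (d a)
        ≤ q / n - d a := by
      intro a ha
      have hda := hdpos a ha
      have harg : 0 < q / (n * d a) := by positivity
      have := Real.log_le_sub_one_of_pos harg
      have hlog : Real.log (q / (n * d a)) = Real.log q - Real.log n - Real.log (d a) := by
        rw [Real.log_div (ne_of_gt hqpos) (by positivity),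
          Real.log_mul (ne_of_gt hn0) (ne_of_gt hda)]
        ring
      rw [hlog] at this
      have := mul_le_mul_of_nonneg_left this (le_of_lt hda)
      rw [Real.negMulLog]
      have hdiv : d a * (q / (n * d a)) = q / n := by
        rw [div_mul_eq_div_div]
        field_simp
      nlinarith [this]
    have hsum := Finset.sum_le_sum key
    have hcard' : (s'.card : ℝ) ≤ n :=
      le_trans (by exact_mod_cast Nat.cast_le.mpr (Finset.card_le_card hsub)) hn
    have hrhs : ∑ a ∈ s', (q / n - d a) ≤ 0 := by
      rw [Finset.sum_sub_distrib, Finset.sum_const, ← hqs']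
      have h1 : (s'.card : ℝ) * (q / n) ≤ n * (q / n) := by
        apply mul_le_mul_of_nonneg_right hcard'
        positivity
      have h2 : n * (q / n) = q := by field_simp
      rw [nsmul_eq_mul]
      linarith
    have hlhs : ∑ a ∈ s', (d a * Real.log q - d a * Real.log n + Real.negMulLog (d a))
        = q * Real.log q - q * Real.log n + ∑ a ∈ s', Real.negMulLog (d a) := by
      rw [Finset.sum_add_distrib, Finset.sum_sub_distrib, ← Finset.sum_mul, ← Finset.sum_mul,
        ← hqs']
    rw [hlhs] at hsum
    rw [hsum_eq, Real.negMulLog, neg_mul]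
    linarith

end SDMMAux
namespace SDMMAux
open SDMM Finset Real

variable {Ω : Type} [Fintype Ω] {α β : Type*}

lemma H_comp_eq [Fintype α] [Fintype β] (p : Ω → ℝ) (X : Ω → α) (f : α → β) :
    H p (fun ω => f (X ω))
      = ∑ b : β, Real.negMulLog (∑ a ∈ Finset.univ.filter (fun a => f a = b), distOf p X a) := by
  unfold H
  exact Finset.sum_congr rfl fun b _ => by rw [distOf_comp]

lemma entropy_comp_le [Fintype α] [Fintype β] (p : Ω → ℝ) (hp : IsPMF p)
    (X : Ω → α) (f : α → β) :
    H p (fun ω => f (X ω)) ≤ H p X := by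
  classical
  rw [H_comp_eq]
  have : H p X = ∑ b : β, ∑ a ∈ Finset.univ.filter (fun a => f a = b),
      Real.negMulLog (distOf p X a) :=
    (Finset.sum_fiberwise_of_maps_to (fun a _ => Finset.mem_univ (f a)) _).symm
  rw [this]
  refine Finset.sum_le_sum fun b _ => ?_
  exact negMulLog_sum_le fun a _ => distOf_nonneg p hp X a

lemma entropy_comp_ge [Fintype α] [Fintype β] [Nonempty α] (p : Ω → ℝ) (hp : IsPMF p)
    (X : Ω → α) (f : α → β) (Bad : Finset α)
    (hinj : ∀ x, x ∉ Bad → ∀ y, f y = f x → y = x) :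
    H p X ≤ H p (fun ω => f (X ω))
      + (∑ a ∈ Bad, distOf p X a) * Real.log (Fintype.card α) := by
  classical
  set d : α → ℝ := distOf p X with hd
  have hd0 : ∀ a, 0 ≤ d a := fun a => distOf_nonneg p hp X a
  have hcard1 : 1 ≤ (Fintype.card α : ℝ) := by
    exact_mod_cast Fintype.card_pos
  set fib : β → Finset α := fun b => Finset.univ.filter (fun a => f a = b) with hfib
  have hHX : H p X = ∑ b : β, ∑ a ∈ fib b, Real.negMulLog (d a) :=
    (Finset.sum_fiberwise_of_maps_to (fun a _ => Finset.mem_univ (f a)) _).symm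
  have key : ∀ b : β, ∑ a ∈ fib b, Real.negMulLog (d a)
      ≤ Real.negMulLog (∑ a ∈ fib b, d a)
        + (if ↑(fib b) ⊆ (Bad : Set α) then (∑ a ∈ fib b, d a) else 0)
          * Real.log (Fintype.card α) := by
    intro b
    by_cases hsb : ↑(fib b) ⊆ (Bad : Set α)
    · rw [if_pos hsb]
      refine sum_negMulLog_le_of_card (fun a _ => hd0 a) ?_ hcard1
      exact_mod_cast Nat.cast_le.mpr (Finset.card_le_card (Finset.subset_univ _))
    · rw [if_neg hsb, zero_mul, add_zero]
      obtain ⟨x, hxfib, hxBad⟩ : ∃ x ∈ fib b, x ∉ Bad := by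
        by_contra h
        push_neg at h
        exact hsb fun a ha => h a ha
      have hxb : f x = b := (Finset.mem_filter.mp hxfib).2
      have hsingle : fib b = {x} := by
        apply Finset.ext
        intro y
        simp only [Finset.mem_singleton, hfib, Finset.mem_filter, Finset.mem_univ, true_and]
        constructor
        · intro hy; exact hinj x hxBad y (by rw [hy, hxb])
        · intro hy; rw [hy, hxb]
      rw [hsingle]
      simp
  have hsum := Finset.sum_le_sum (s := (Finset.univ : Finset β)) fun b _ => key b
  rw [← hHX] at hsum
  have hH2 : ∑ b : β, Real.negMulLog (∑ a ∈ fib b, d a) = H p (fun ω => f (X ω)) :=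
    (H_comp_eq p X f).symm
  rw [Finset.sum_add_distrib, hH2] at hsum
  refine le_trans hsum ?_
  rw [add_le_add_iff_left, ← Finset.sum_mul]
  apply mul_le_mul_of_nonneg_right _ (Real.log_nonneg hcard1)
  have step1 : ∀ b : β, (if ↑(fib b) ⊆ (Bad : Set α) then (∑ a ∈ fib b, d a) else 0)
      = ∑ a ∈ fib b, (if ↑(fib (f a)) ⊆ (Bad : Set α) then d a else 0) := by
    intro b
    split_ifs with h
    · refine Finset.sum_congr rfl fun a ha => ?_
      have : f a = b := (Finset.mem_filter.mp ha).2
      rw [this, if_pos h]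
    · symm
      refine Finset.sum_eq_zero fun a ha => ?_
      have : f a = b := (Finset.mem_filter.mp ha).2
      rw [this, if_neg h]
  simp_rw [step1]
  rw [Finset.sum_fiberwise_of_maps_to (fun a _ => Finset.mem_univ (f a))]
  have : ∑ a : α, (if ↑(fib (f a)) ⊆ (Bad : Set α) then d a else 0)
      ≤ ∑ a : α, (if a ∈ Bad then d a else 0) := by
    refine Finset.sum_le_sum fun a _ => ?_
    split_ifs with h1 h2
    · exact le_rfl
    · exact absurd (h1 (by simp [hfib])) h2
    · exact hd0 a
    · exact le_rfl
  refine le_trans this ?_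
  rw [Finset.sum_ite_mem]
  simp

end SDMMAux
namespace SDMMAux
open SDMM Finset Real

variable {Ω : Type} [Fintype Ω] {α β : Type*}

lemma uniform_H [Fintype α] (p : Ω → ℝ) (X : Ω → α) (hu : Uniform p X) :
    H p X = Real.log (Fintype.card α) := by
  unfold H
  have hu' : ∀ a, distOf p X a = 1 / (Fintype.card α : ℝ) := hu
  simp_rw [hu']
  rw [Finset.sum_const, nsmul_eq_mul]
  rcases Nat.eq_zero_or_pos (Fintype.card α) with h | h
  · simp [h, Real.negMulLog]
  · have hn : (0:ℝ) < Fintype.card α := by exact_mod_cast h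
    rw [Real.negMulLog, one_div, Real.log_inv]
    field_simp
    rw [Finset.card_univ]

lemma uniform_pair [Fintype α] [Fintype β] (p : Ω → ℝ) (X : Ω → α) (Y : Ω → β)
    (hX : Uniform p X) (hY : Uniform p Y) (hI : IndepRV p X Y) :
    Uniform p (fun ω => (X ω, Y ω)) := by
  rintro ⟨a, b⟩
  rw [hI a b, hX a, hY b, Fintype.card_prod]
  push_cast
  rw [div_mul_div_comm, one_mul]

lemma uniform_comp [Fintype α] [Fintype β] [Nonempty α] (p : Ω → ℝ) (X : Ω → α) (f : α → β)
    (hX : Uniform p X)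
    (hcard : ∀ b : β,
      (Finset.univ.filter (fun a => f a = b)).card * Fintype.card β = Fintype.card α) :
    Uniform p (fun ω => f (X ω)) := by
  classical
  intro b
  rw [distOf_comp]
  have hX' : ∀ a, distOf p X a = 1 / (Fintype.card α : ℝ) := hX
  simp_rw [hX']
  rw [Finset.sum_const, nsmul_eq_mul]
  have hβ : (0:ℝ) < Fintype.card β := by
    have : Nonempty β := ⟨b⟩
    exact_mod_cast Fintype.card_pos
  have hα : (0:ℝ) < Fintype.card α := by exact_mod_cast Fintype.card_pos
  have := hcard b
  field_simp
  exact_mod_cast this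

lemma card_fiber_mul_card {V W : Type*} [AddCommGroup V] [AddCommGroup W] [Fintype V] [Fintype W]
    (f : V →+ W) (hf : Function.Surjective f) (w : W) :
    (Finset.univ.filter (fun v => f v = w)).card * Fintype.card W = Fintype.card V := by
  classical
  have hconst : ∀ w' : W, (Finset.univ.filter (fun v => f v = w')).card
      = (Finset.univ.filter (fun v => f v = w)).card := by
    intro w'
    obtain ⟨v₀, hv₀⟩ := hf w
    obtain ⟨v₁, hv₁⟩ := hf w'
    apply Finset.card_bij (fun v _ => v - v₁ + v₀)
    · intro v hv
      simp only [Finset.mem_filter, Finset.mem_univ, true_and] at hv ⊢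
      rw [map_add, map_sub, hv, hv₁, hv₀]
      abel
    · intro a ha b hb h
      have : a - v₁ = b - v₁ := by
        have := add_right_cancel h
        exact this
      exact sub_left_injective this
    · intro v hv
      simp only [Finset.mem_filter, Finset.mem_univ, true_and] at hv
      refine ⟨v - v₀ + v₁, ?_, by abel⟩
      simp only [Finset.mem_filter, Finset.mem_univ, true_and]
      rw [map_add, map_sub, hv, hv₀, hv₁]
      abel
  have hcardV : Fintype.card V = ∑ w' : W, (Finset.univ.filter (fun v => f v = w')).card := by
    rw [Fintype.card]
    exact Finset.card_eq_sum_card_fiberwise (fun v _ => Finset.mem_univ (f v))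
  rw [hcardV]
  rw [Finset.sum_congr rfl (fun w' _ => hconst w'), Finset.sum_const, smul_eq_mul,
    Fintype.card, mul_comm]

lemma card_matrix (m n : ℕ) (F : Type) [Fintype F] :
    Fintype.card (Matrix (Fin m) (Fin n) F) = Fintype.card F ^ (m * n) := by
  rw [show Fintype.card (Matrix (Fin m) (Fin n) F) = Fintype.card (Fin m → Fin n → F) from rfl]
  simp [← pow_mul, Nat.mul_comm]

end SDMMAux
namespace SDMMAux
open SDMM Finset Real Matrix

section Counting
variable {F : Type} [Field F] [Fintype F]

/-- `a ↦ a *ᵥ v` as an additive monoid hom. -/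
def mulVecHom (n k : ℕ) (v : Fin k → F) : Matrix (Fin n) (Fin k) F →+ (Fin n → F) :=
  AddMonoidHom.mk' (fun a => a *ᵥ v) (fun a b => Matrix.add_mulVec a b v)

lemma mulVecHom_surjective {n k : ℕ} {v : Fin k → F} {j : Fin k} (hv : v j = 1) :
    Function.Surjective (mulVecHom n k v) := by
  classical
  intro w
  refine ⟨Matrix.of fun i k' => if k' = j then w i else 0, ?_⟩
  funext i
  show ((Matrix.of fun i k' => if k' = j then w i else 0) *ᵥ v) i = w i
  simp [Matrix.mulVec, dotProduct, ite_mul, hv, Finset.sum_ite_eq']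

lemma card_eval_fiber (k : ℕ) (j : Fin k) (c : F) :
    (Finset.univ.filter (fun v : Fin k → F => v j = c)).card * Fintype.card F
      = Fintype.card F ^ k := by
  classical
  have h := card_fiber_mul_card (Pi.evalAddMonoidHom (fun _ : Fin k => F) j)
    (fun w => ⟨fun _ => w, rfl⟩) c
  simpa [Fintype.card_fun] using h

/-- Union bound: the set of `a` killed by some nonzero `v` is small. -/
lemma card_bad_le {V : Type*} [Fintype V] (k n : ℕ)
    (Φ : (Fin k → F) → V → (Fin n → F))
    (hsmul : ∀ (c : F) (v : Fin k → F) (a : V), Φ (c • v) a = c • Φ v a)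
    (hfib : ∀ (v : Fin k → F) (j : Fin k), v j = 1 →
      (Finset.univ.filter (fun a : V => Φ v a = 0)).card * Fintype.card F ^ n
        = Fintype.card V) :
    (Finset.univ.filter (fun a : V => ∃ v, v ≠ 0 ∧ Φ v a = 0)).card
        * Fintype.card F ^ (n + 1)
      ≤ k * (Fintype.card V * Fintype.card F ^ k) := by
  classical
  set q := Fintype.card F with hqdef
  set Bad := Finset.univ.filter (fun a : V => ∃ v, v ≠ 0 ∧ Φ v a = 0) with hBad
  have hsub : Bad ⊆ Finset.univ.biUnion (fun j : Fin k =>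
      Finset.univ.filter (fun a : V => ∃ v, v j = 1 ∧ Φ v a = 0)) := by
    intro a ha
    rw [hBad, Finset.mem_filter] at ha
    obtain ⟨-, v, hv0, hva⟩ := ha
    obtain ⟨j, hj⟩ : ∃ j, v j ≠ 0 := by
      by_contra h
      push_neg at h
      exact hv0 (funext h)
    refine Finset.mem_biUnion.mpr ⟨j, Finset.mem_univ j, Finset.mem_filter.mpr
      ⟨Finset.mem_univ a, (v j)⁻¹ • v, ?_, ?_⟩⟩
    · simp [Pi.smul_apply, inv_mul_cancel₀ hj]
    · rw [hsmul, hva, smul_zero]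
  have hstep : ∀ j : Fin k,
      (Finset.univ.filter (fun a : V => ∃ v, v j = 1 ∧ Φ v a = 0)).card
        ≤ ∑ v ∈ Finset.univ.filter (fun v : Fin k → F => v j = 1),
            (Finset.univ.filter (fun a : V => Φ v a = 0)).card := by
    intro j
    have hsub2 : Finset.univ.filter (fun a : V => ∃ v, v j = 1 ∧ Φ v a = 0)
        ⊆ (Finset.univ.filter (fun v : Fin k → F => v j = 1)).biUnion
            (fun v => Finset.univ.filter (fun a : V => Φ v a = 0)) := by
      intro a ha
      rw [Finset.mem_filter] at ha
      obtain ⟨-, v, hv1, hva⟩ := ha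
      exact Finset.mem_biUnion.mpr ⟨v, Finset.mem_filter.mpr ⟨Finset.mem_univ v, hv1⟩,
        Finset.mem_filter.mpr ⟨Finset.mem_univ a, hva⟩⟩
    exact le_trans (Finset.card_le_card hsub2) (Finset.card_biUnion_le)
  have h1 : Bad.card ≤ ∑ j : Fin k,
      ∑ v ∈ Finset.univ.filter (fun v : Fin k → F => v j = 1),
        (Finset.univ.filter (fun a : V => Φ v a = 0)).card :=
    le_trans (Finset.card_le_card hsub) (le_trans Finset.card_biUnion_le
      (Finset.sum_le_sum fun j _ => hstep j))
  have h2 : Bad.card * q ^ (n + 1) ≤ (∑ j : Fin k,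
      ∑ v ∈ Finset.univ.filter (fun v : Fin k → F => v j = 1),
        (Finset.univ.filter (fun a : V => Φ v a = 0)).card) * q ^ (n + 1) :=
    Nat.mul_le_mul_right _ h1
  refine le_trans h2 ?_
  rw [Finset.sum_mul]
  have h3 : ∀ j : Fin k, (∑ v ∈ Finset.univ.filter (fun v : Fin k → F => v j = 1),
      (Finset.univ.filter (fun a : V => Φ v a = 0)).card) * q ^ (n + 1)
      = Fintype.card V * q ^ k := by
    intro j
    rw [Finset.sum_mul]
    have : ∀ v ∈ Finset.univ.filter (fun v : Fin k → F => v j = 1),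
        (Finset.univ.filter (fun a : V => Φ v a = 0)).card * q ^ (n + 1)
          = Fintype.card V * q := by
      intro v hv
      have hv1 : v j = 1 := (Finset.mem_filter.mp hv).2
      rw [pow_succ, ← mul_assoc, hfib v j hv1]
    rw [Finset.sum_congr rfl this, Finset.sum_const, smul_eq_mul, ← mul_assoc,
      mul_comm ((Finset.univ.filter (fun v : Fin k → F => v j = 1)).card) (Fintype.card V),
      mul_assoc, card_eval_fiber k j 1]
  rw [Finset.sum_congr rfl (fun j _ => h3 j), Finset.sum_const, smul_eq_mul]
  simp

end Counting
end SDMMAux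
namespace SDMMAux
open SDMM Finset Real Matrix

section Specific
variable {F : Type} [Field F] [Fintype F]

/-- restriction to the first `K` columns, as an additive monoid hom. -/
def restrictHom (K M : ℕ) (h : K ≤ M) :
    Matrix (Fin K) (Fin M) F →+ Matrix (Fin K) (Fin K) F :=
  AddMonoidHom.mk' (fun b => Matrix.of fun i j => b i (Fin.castLE h j))
    (fun a b => by ext i j; simp)

lemma restrictHom_surjective (K M : ℕ) (h : K ≤ M) :
    Function.Surjective (restrictHom (F := F) K M h) := by
  classical
  intro c
  refine ⟨Matrix.of fun i j => if h' : (j : ℕ) < K then c i ⟨j, h'⟩ else 0, ?_⟩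
  ext i j
  simp only [restrictHom, AddMonoidHom.mk'_apply, Matrix.of_apply]
  rw [dif_pos (show ((Fin.castLE h j : Fin M) : ℕ) < K from j.2)]
  congr 1

/-- injectivity of `(a, b) ↦ (a * b, restrict b)` on good pairs -/
lemma good_inj {L K M : ℕ} (h : K ≤ M)
    (x y : Matrix (Fin L) (Fin K) F × Matrix (Fin K) (Fin M) F)
    (hb : ∀ v : Fin K → F, (restrictHom K M h x.2) *ᵥ v = 0 → v = 0)
    (ha : ∀ v : Fin K → F, x.1 *ᵥ v = 0 → v = 0)
    (h1 : y.1 * y.2 = x.1 * x.2) (h2 : restrictHom K M h y.2 = restrictHom K M h x.2) :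
    y = x := by
  classical
  set b₁ : Matrix (Fin K) (Fin K) F := restrictHom K M h x.2 with hb₁
  have key1 : y.1 * b₁ = x.1 * b₁ := by
    ext i j
    have hcong := congrFun (congrFun (congrArg (fun m : Matrix (Fin L) (Fin M) F => m) h1) i)
      (Fin.castLE h j)
    have expand : ∀ (m : Matrix (Fin L) (Fin K) F) (b : Matrix (Fin K) (Fin M) F),
        (m * b) i (Fin.castLE h j) = (m * (restrictHom K M h b : Matrix (Fin K) (Fin K) F)) i j := by
      intro m b
      simp [Matrix.mul_apply, restrictHom]
    have := expand y.1 y.2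
    rw [h2] at this
    rw [← this, ← expand x.1 x.2]
    exact hcong
  have hinj : Function.Injective (b₁.mulVec) := by
    intro u v huv
    have : b₁ *ᵥ (u - v) = 0 := by rw [Matrix.mulVec_sub, huv, sub_self]
    have := hb _ this
    exact sub_eq_zero.mp this
  have hsurj : Function.Surjective (b₁.mulVec) :=
    (Finite.injective_iff_surjective).mp hinj
  have hA : y.1 = x.1 := by
    have hvec : ∀ w : Fin K → F, y.1 *ᵥ w = x.1 *ᵥ w := by
      intro w
      obtain ⟨v, hv⟩ := hsurj w
      rw [← hv, Matrix.mulVec_mulVec, Matrix.mulVec_mulVec, key1]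
    ext i j
    have := congrFun (hvec (Pi.single j 1)) i
    rw [Matrix.mulVec_single, Matrix.mulVec_single] at this
    simpa using this
  have hB : y.2 = x.2 := by
    rw [hA] at h1
    ext k j
    have hcol : x.1 *ᵥ (fun k => y.2 k j - x.2 k j) = 0 := by
      funext i
      show ∑ k', x.1 i k' * (y.2 k' j - x.2 k' j) = 0
      have := congrFun (congrFun h1 i) j
      rw [Matrix.mul_apply, Matrix.mul_apply] at this
      simp only [mul_sub]
      rw [Finset.sum_sub_distrib, this, sub_self]
    have := congrFun (ha _ hcol) k
    simpa [sub_eq_zero] using this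
  exact Prod.ext hA hB

lemma filter_fst_card {α β : Type*} [Fintype α] [Fintype β] (P : α → Prop) :
    (Finset.univ.filter (fun x : α × β => P x.1)).card
      = (Finset.univ.filter P).card * Fintype.card β := by
  classical
  have : (Finset.univ.filter (fun x : α × β => P x.1))
      = (Finset.univ.filter P) ×ˢ (Finset.univ : Finset β) := by
    ext ⟨a, b⟩
    simp [Finset.mem_product]
  rw [this, Finset.card_product, Finset.card_univ]

lemma filter_snd_card {α β : Type*} [Fintype α] [Fintype β] (P : β → Prop) :
    (Finset.univ.filter (fun x : α × β => P x.2)).card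
      = Fintype.card α * (Finset.univ.filter P).card := by
  classical
  have : (Finset.univ.filter (fun x : α × β => P x.2))
      = (Finset.univ : Finset α) ×ˢ (Finset.univ.filter P) := by
    ext ⟨a, b⟩
    simp [Finset.mem_product]
  rw [this, Finset.card_product, Finset.card_univ]

end Specific
end SDMMAux

open SDMMAux Matrix in
/-- **Lemma 7, eq. (22) (`H(AB | B₁)` for `K < min(L, M)`).**
Fix positive `L, K, M` with `K < M` and `K < L`.  For every `ε > 0` and all
sufficiently large finite fields `F` (`|F| = q`): if `A`, `B` are independent
uniformly random matrices over `F^{L×K}`, `F^{K×M}` and `B₁` is the `K × K`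
matrix of the first `K` columns of `B`, then `H(AB | B₁)` in `q`-ary units is
within `ε` of `L·K + K·(M - K)`. -/
theorem cond_entropy_product_given_first_block
    (L K M : ℕ) (hL : 0 < L) (hK : 0 < K) (hM : 0 < M)
    (hKM : K < M) (hKL : K < L) (ε : ℝ) (hε : 0 < ε) :
    ∃ q₀ : ℕ, ∀ (F : Type) [Field F] [Fintype F], q₀ ≤ Fintype.card F →
      ∀ (Ω : Type) [Fintype Ω] (p : Ω → ℝ), SDMM.IsPMF p →
        ∀ (A : Ω → Matrix (Fin L) (Fin K) F) (B : Ω → Matrix (Fin K) (Fin M) F),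
          SDMM.Uniform p A → SDMM.Uniform p B → SDMM.IndepRV p A B →
          ∀ (B₁ : Ω → Matrix (Fin K) (Fin K) F),
            (∀ ω i (j : Fin K), B₁ ω i j = B ω i ⟨j, lt_trans j.2 hKM⟩) →
            |SDMM.Hc p (fun ω => A ω * B ω) B₁ / Real.log (Fintype.card F) -
              (L * K + K * (M - K) : ℝ)| < ε := by
  classical
  set T : ℝ := ((L * K + K * M : ℕ) : ℝ) with hT
  refine ⟨⌈2 * K * T / ε⌉₊ + 2, ?_⟩
  intro F _ _ hqF Ω _ p hp A B hA hB hAB B₁ hB₁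
  set q := Fintype.card F with hq
  have hq1 : 1 < q := Fintype.one_lt_card
  have hq0 : 0 < q := lt_trans one_pos hq1
  have hq1R : (1:ℝ) < (q:ℝ) := by exact_mod_cast hq1
  have hlogq : 0 < Real.log q := Real.log_pos hq1R
  -- abbreviations
  set r : Matrix (Fin K) (Fin M) F →+ Matrix (Fin K) (Fin K) F :=
    restrictHom K M hKM.le with hr
  set g : (Matrix (Fin L) (Fin K) F × Matrix (Fin K) (Fin M) F) →
      (Matrix (Fin L) (Fin M) F × Matrix (Fin K) (Fin K) F) :=
    fun x => (x.1 * x.2, r x.2) with hg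
  set X : Ω → (Matrix (Fin L) (Fin K) F × Matrix (Fin K) (Fin M) F) :=
    fun ω => (A ω, B ω) with hX
  -- B₁ is the restriction of B
  have hB₁fun : B₁ = fun ω => (r (B ω) : Matrix (Fin K) (Fin K) F) := by
    funext ω
    ext i j
    rw [hB₁ ω i j]
    rfl
  -- rewrite Hc
  have hHc : SDMM.Hc p (fun ω => A ω * B ω) B₁
      = SDMM.H p (fun ω => g (X ω)) - SDMM.H p (fun ω => (r (B ω))) := by
    rw [SDMM.Hc, hB₁fun]
  -- uniformity facts
  have hXunif : SDMM.Uniform p X := uniform_pair p A B hA hB hAB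
  have hB₁unif : SDMM.Uniform p (fun ω => r (B ω)) :=
    uniform_comp p B (fun b => r b) hB (fun c => by
      have h := card_fiber_mul_card r (restrictHom_surjective K M hKM.le) c
      convert h using 3)
  -- entropy values
  have hHB₁ : SDMM.H p (fun ω => (r (B ω))) = (K * K : ℕ) * Real.log q := by
    rw [uniform_H p _ hB₁unif, card_matrix K K F, ← hq, Nat.cast_pow, Real.log_pow]
  have hcardprod : Fintype.card
      (Matrix (Fin L) (Fin K) F × Matrix (Fin K) (Fin M) F) = q ^ (L * K + K * M) := by
    rw [Fintype.card_prod, card_matrix, card_matrix, ← hq, ← pow_add]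
  have hHX : SDMM.H p X = (L * K + K * M : ℕ) * Real.log q := by
    rw [uniform_H p X hXunif, hcardprod, Nat.cast_pow, Real.log_pow]
  -- upper bound
  have hup : SDMM.H p (fun ω => g (X ω)) ≤ SDMM.H p X := entropy_comp_le p hp X g
  -- bad set
  set Bad : Finset (Matrix (Fin L) (Fin K) F × Matrix (Fin K) (Fin M) F) :=
    Finset.univ.filter (fun x => ¬ ((∀ v, (r x.2) *ᵥ v = 0 → v = 0)
      ∧ (∀ v, x.1 *ᵥ v = 0 → v = 0))) with hBadDef
  have hinj : ∀ x, x ∉ Bad → ∀ y, g y = g x → y = x := by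
    intro x hx y hgy
    rw [hBadDef, Finset.mem_filter, not_and] at hx
    have hgood := not_not.mp (hx (Finset.mem_univ x))
    rw [hg] at hgy
    have h1 : y.1 * y.2 = x.1 * x.2 := congrArg Prod.fst hgy
    have h2 : r y.2 = r x.2 := congrArg Prod.snd hgy
    exact good_inj hKM.le x y hgood.1 hgood.2 h1 h2
  have hlow := entropy_comp_ge p hp X g Bad hinj
  -- bad set cardinality
  have hBadA : (Finset.univ.filter (fun a : Matrix (Fin L) (Fin K) F =>
      ∃ v, v ≠ 0 ∧ a *ᵥ v = 0)).card ≤ K * q ^ (L * K - 1) := by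
    have h := card_bad_le (F := F) K L (fun v a => a *ᵥ v)
      (fun c v a => Matrix.mulVec_smul a c v)
      (fun v j hv => by
        have h := card_fiber_mul_card (mulVecHom L K v) (mulVecHom_surjective hv) 0
        have hcf : Fintype.card (Fin L → F) = Fintype.card F ^ L := by simp
        rw [hcf] at h
        convert h using 3
        ext a
        simp [mulVecHom, Finset.mem_filter])
    rw [card_matrix L K F, ← hq] at h
    have hexp : q ^ (L * K) * q ^ K ≤ q ^ (L * K - 1) * q ^ (L + 1) := by
      rw [← pow_add, ← pow_add]
      apply Nat.pow_le_pow_right hq0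
      have : 1 ≤ L * K := Nat.one_le_iff_ne_zero.mpr (Nat.mul_ne_zero hL.ne' hK.ne')
      omega
    have h2 : (Finset.univ.filter (fun a : Matrix (Fin L) (Fin K) F =>
        ∃ v, v ≠ 0 ∧ a *ᵥ v = 0)).card * q ^ (L + 1)
        ≤ (K * q ^ (L * K - 1)) * q ^ (L + 1) := by
      calc _ ≤ K * (q ^ (L * K) * q ^ K) := h
        _ ≤ K * (q ^ (L * K - 1) * q ^ (L + 1)) := Nat.mul_le_mul_left K hexp
        _ = (K * q ^ (L * K - 1)) * q ^ (L + 1) := by ring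
    exact Nat.le_of_mul_le_mul_right h2 (pow_pos hq0 _)
  have hBadB : (Finset.univ.filter (fun b : Matrix (Fin K) (Fin M) F =>
      ∃ v, v ≠ 0 ∧ (r b) *ᵥ v = 0)).card ≤ K * q ^ (K * M - 1) := by
    have h := card_bad_le (F := F) K K (fun v b => (r b) *ᵥ v)
      (fun c v b => Matrix.mulVec_smul (r b) c v)
      (fun v j hv => by
        have hsurj : Function.Surjective ((mulVecHom K K v).comp r) := by
          rw [AddMonoidHom.coe_comp]
          exact Function.Surjective.comp (mulVecHom_surjective hv)
            (restrictHom_surjective K M hKM.le)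
        have h := card_fiber_mul_card ((mulVecHom K K v).comp r) hsurj 0
        have hcf : Fintype.card (Fin K → F) = Fintype.card F ^ K := by simp
        rw [hcf] at h
        convert h using 3
        ext b
        simp [mulVecHom, Finset.mem_filter])
    rw [card_matrix K M F, ← hq] at h
    have hexp : q ^ (K * M) * q ^ K ≤ q ^ (K * M - 1) * q ^ (K + 1) := by
      rw [← pow_add, ← pow_add]
      apply Nat.pow_le_pow_right hq0
      have : 1 ≤ K * M := Nat.one_le_iff_ne_zero.mpr (Nat.mul_ne_zero hK.ne' hM.ne')
      omega
    have h2 : (Finset.univ.filter (fun b : Matrix (Fin K) (Fin M) F =>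
        ∃ v, v ≠ 0 ∧ (r b) *ᵥ v = 0)).card * q ^ (K + 1)
        ≤ (K * q ^ (K * M - 1)) * q ^ (K + 1) := by
      calc _ ≤ K * (q ^ (K * M) * q ^ K) := h
        _ ≤ K * (q ^ (K * M - 1) * q ^ (K + 1)) := Nat.mul_le_mul_left K hexp
        _ = (K * q ^ (K * M - 1)) * q ^ (K + 1) := by ring
    exact Nat.le_of_mul_le_mul_right h2 (pow_pos hq0 _)
  have hBadCard : Bad.card ≤ 2 * K * q ^ (L * K + K * M - 1) := by
    have hsub : Bad ⊆
        (Finset.univ.filter (fun x : Matrix (Fin L) (Fin K) F × Matrix (Fin K) (Fin M) F =>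
          ∃ v, v ≠ 0 ∧ x.1 *ᵥ v = 0))
        ∪ (Finset.univ.filter (fun x : Matrix (Fin L) (Fin K) F × Matrix (Fin K) (Fin M) F =>
          ∃ v, v ≠ 0 ∧ (r x.2) *ᵥ v = 0)) := by
      intro x hx
      rw [hBadDef, Finset.mem_filter] at hx
      rw [Finset.mem_union, Finset.mem_filter, Finset.mem_filter]
      rcases not_and_or.mp hx.2 with h | h
      · push_neg at h
        obtain ⟨v, hv1, hv2⟩ := h
        exact Or.inr ⟨Finset.mem_univ x, v, hv2, hv1⟩
      · push_neg at h
        obtain ⟨v, hv1, hv2⟩ := h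
        exact Or.inl ⟨Finset.mem_univ x, v, hv2, hv1⟩
    have := Finset.card_le_card hsub
    have hcu := Finset.card_union_le
      (Finset.univ.filter (fun x : Matrix (Fin L) (Fin K) F × Matrix (Fin K) (Fin M) F =>
          ∃ v, v ≠ 0 ∧ x.1 *ᵥ v = 0))
      (Finset.univ.filter (fun x : Matrix (Fin L) (Fin K) F × Matrix (Fin K) (Fin M) F =>
          ∃ v, v ≠ 0 ∧ (r x.2) *ᵥ v = 0))
    have hA' : (Finset.univ.filter
        (fun x : Matrix (Fin L) (Fin K) F × Matrix (Fin K) (Fin M) F =>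
          ∃ v, v ≠ 0 ∧ x.1 *ᵥ v = 0)).card ≤ K * q ^ (L * K - 1) * q ^ (K * M) := by
      have hset : (Finset.univ.filter
          (fun x : Matrix (Fin L) (Fin K) F × Matrix (Fin K) (Fin M) F =>
            ∃ v, v ≠ 0 ∧ x.1 *ᵥ v = 0))
          = (Finset.univ.filter (fun a : Matrix (Fin L) (Fin K) F =>
              ∃ v, v ≠ 0 ∧ a *ᵥ v = 0)) ×ˢ (Finset.univ : Finset (Matrix (Fin K) (Fin M) F)) := by
        ext ⟨a, b⟩
        simp [Finset.mem_product]
      rw [hset, Finset.card_product, Finset.card_univ, card_matrix, ← hq]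
      exact Nat.mul_le_mul_right _ hBadA
    have hB' : (Finset.univ.filter
        (fun x : Matrix (Fin L) (Fin K) F × Matrix (Fin K) (Fin M) F =>
          ∃ v, v ≠ 0 ∧ (r x.2) *ᵥ v = 0)).card ≤ q ^ (L * K) * (K * q ^ (K * M - 1)) := by
      have hset : (Finset.univ.filter
          (fun x : Matrix (Fin L) (Fin K) F × Matrix (Fin K) (Fin M) F =>
            ∃ v, v ≠ 0 ∧ (r x.2) *ᵥ v = 0))
          = (Finset.univ : Finset (Matrix (Fin L) (Fin K) F)) ×ˢ (Finset.univ.filter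
              (fun b : Matrix (Fin K) (Fin M) F => ∃ v, v ≠ 0 ∧ (r b) *ᵥ v = 0)) := by
        ext ⟨a, b⟩
        simp [Finset.mem_product]
      rw [hset, Finset.card_product, Finset.card_univ, card_matrix, ← hq]
      exact Nat.mul_le_mul_left _ hBadB
    have hLK1 : 1 ≤ L * K := Nat.one_le_iff_ne_zero.mpr (Nat.mul_ne_zero hL.ne' hK.ne')
    have hKM1 : 1 ≤ K * M := Nat.one_le_iff_ne_zero.mpr (Nat.mul_ne_zero hK.ne' hM.ne')
    have e1 : K * q ^ (L * K - 1) * q ^ (K * M) = K * q ^ (L * K + K * M - 1) := by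
      rw [mul_assoc, ← pow_add]
      congr 2
      omega
    have e2 : q ^ (L * K) * (K * q ^ (K * M - 1)) = K * q ^ (L * K + K * M - 1) := by
      rw [← mul_assoc, mul_comm (q ^ (L*K)) K, mul_assoc, ← pow_add]
      congr 2
      omega
    calc Bad.card ≤ _ := this
      _ ≤ _ := hcu
      _ ≤ K * q ^ (L * K - 1) * q ^ (K * M) + q ^ (L * K) * (K * q ^ (K * M - 1)) :=
          Nat.add_le_add hA' hB'
      _ = 2 * K * q ^ (L * K + K * M - 1) := by rw [e1, e2]; ring
  -- probability of bad
  have hqR0 : (0:ℝ) < (q:ℝ) := by exact_mod_cast hq0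
  have hPbad : ∑ a ∈ Bad, SDMM.distOf p X a ≤ 2 * K / q := by
    have heach : ∀ a ∈ Bad, SDMM.distOf p X a
        = 1 / ((q:ℝ) ^ (L * K + K * M)) := by
      intro a _
      rw [hXunif a, hcardprod]
      push_cast
      ring
    rw [Finset.sum_congr rfl heach, Finset.sum_const, nsmul_eq_mul, mul_one_div]
    have hqn : (0:ℝ) < (q:ℝ) ^ (L * K + K * M) := pow_pos hqR0 _
    rw [div_le_div_iff₀ hqn hqR0]
    have hcardR : (Bad.card : ℝ) ≤ 2 * K * (q:ℝ) ^ (L * K + K * M - 1) := by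
      exact_mod_cast hBadCard
    have hsplit : (q:ℝ) ^ (L * K + K * M - 1) * (q:ℝ) = (q:ℝ) ^ (L * K + K * M) := by
      rw [← pow_succ]
      congr 1
      have h1 : 1 ≤ L * K := Nat.one_le_iff_ne_zero.mpr (Nat.mul_ne_zero hL.ne' hK.ne')
      omega
    calc (Bad.card : ℝ) * q ≤ (2 * K * (q:ℝ) ^ (L * K + K * M - 1)) * q :=
          mul_le_mul_of_nonneg_right hcardR (le_of_lt hqR0)
      _ = 2 * K * ((q:ℝ) ^ (L * K + K * M - 1) * q) := by ring
      _ = 2 * K * (q:ℝ) ^ (L * K + K * M) := by rw [hsplit]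
  have hPbad0 : 0 ≤ ∑ a ∈ Bad, SDMM.distOf p X a :=
    Finset.sum_nonneg fun a _ => distOf_nonneg p hp X a
  -- log of product card
  have hlogprod : Real.log (Fintype.card
      (Matrix (Fin L) (Fin K) F × Matrix (Fin K) (Fin M) F)) = T * Real.log q := by
    rw [hcardprod, Nat.cast_pow, Real.log_pow, hT]
  -- put bounds together
  set Pb : ℝ := ∑ a ∈ Bad, SDMM.distOf p X a with hPb
  have hupper : SDMM.Hc p (fun ω => A ω * B ω) B₁ ≤ (T - (K * K : ℕ)) * Real.log q := by
    rw [hHc, hHB₁]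
    have : SDMM.H p (fun ω => g (X ω)) ≤ T * Real.log q := by
      rw [← hT] at hHX
      calc SDMM.H p (fun ω => g (X ω)) ≤ SDMM.H p X := hup
        _ = T * Real.log q := hHX
    linarith
  have hlower : (T - (K * K : ℕ) - Pb * T) * Real.log q
      ≤ SDMM.Hc p (fun ω => A ω * B ω) B₁ := by
    rw [hHc, hHB₁]
    have h1 : SDMM.H p X ≤ SDMM.H p (fun ω => g (X ω)) + Pb * (T * Real.log q) := by
      rw [← hlogprod]
      exact hlow
    rw [← hT] at hHX
    rw [hHX] at h1
    have expand : (T - ((K * K : ℕ) : ℝ) - Pb * T) * Real.log q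
        = T * Real.log q - ((K * K : ℕ) : ℝ) * Real.log q - Pb * (T * Real.log q) := by ring
    rw [expand]
    linarith [h1]
  -- final numeric estimate
  have hqge : (2 * K * T / ε : ℝ) < q := by
    have h1 : (⌈2 * K * T / ε⌉₊ : ℝ) + 2 ≤ q := by
      have := hqF
      exact_mod_cast this
    have h2 : (2 * K * T / ε : ℝ) ≤ ⌈2 * K * T / ε⌉₊ := Nat.le_ceil _
    linarith
  have hPbT : Pb * T < ε := by
    have hT0 : (0:ℝ) < T := by
      rw [hT]
      have : 0 < L * K + K * M := by positivity
      exact_mod_cast this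
    have h2 : Pb ≤ 2 * K / q := hPbad
    have h3 : Pb * T ≤ (2 * K / q) * T := mul_le_mul_of_nonneg_right h2 (le_of_lt hT0)
    have h4 : (2 * K / q) * T < ε := by
      rw [div_mul_eq_mul_div, div_lt_iff₀ hqR0]
      have : 2 * K * T / ε < q := hqge
      rw [div_lt_iff₀ hε] at this
      linarith [this]
    linarith
  -- target as a real number
  have htarget : (L * K + K * (M - K) : ℝ) = T - (K * K : ℕ) := by
    rw [hT]
    push_cast
    have : (K:ℝ) ≤ M := by exact_mod_cast hKM.le
    ring
  rw [htarget, abs_sub_lt_iff]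
  constructor
  · have : SDMM.Hc p (fun ω => A ω * B ω) B₁ / Real.log q ≤ T - (K * K : ℕ) := by
      rw [div_le_iff₀ hlogq]
      exact hupper
    linarith
  · have : T - (K * K : ℕ) - Pb * T ≤ SDMM.Hc p (fun ω => A ω * B ω) B₁ / Real.log q := by
      rw [le_div_iff₀ hlogq]
      exact hlower
    have hPb0T : 0 ≤ Pb * T := by
      apply mul_nonneg hPbad0
      rw [hT]; positivity
    linarith
end
end

section
/- Let A, B, S, Δ, P be random variables such that: (i) H(Δ | S, A) = 0 (the download Δ is a function of the secret shares S and the side-information A); (ii) I(S ; B) = 0 (the shares reveal nothing about B); (iii) I(A ; (B, S)) = 0 (A is independent of B together with its shares); and (iv) H(P | A, B) = 0 (the desired product P is a function of A and B). Then I(Δ ; P | A) = 0. -/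
open scoped BigOperators Classical

noncomputable section

namespace SDMM

variable {Ω : Type} [Fintype Ω] (p : Ω → ℝ)

lemma distOf_nonneg (hp : IsPMF p) {α : Type*} (X : Ω → α) (a : α) : 0 ≤ distOf p X a := by
  apply Finset.sum_nonneg
  intro ω _
  split <;> simp [hp.1 ω]

lemma sum_distOf {α : Type*} [Fintype α] (X : Ω → α) : ∑ a, distOf p X a = ∑ ω, p ω := by
  unfold distOf
  rw [Finset.sum_comm]
  exact Finset.sum_congr rfl fun ω _ => by simp

lemma sum_distOf_mul {α : Type*} [Fintype α] (X : Ω → α) (g : α → ℝ) :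
    ∑ a, distOf p X a * g a = ∑ ω, p ω * g (X ω) := by
  unfold distOf
  simp only [Finset.sum_mul]
  rw [Finset.sum_comm]
  refine Finset.sum_congr rfl fun ω _ => ?_
  rw [Finset.sum_congr rfl (fun a _ => ite_mul (X ω = a) (p ω) 0 (g a)), ]
  simp [Finset.sum_ite_eq]

lemma H_eq_sum_omega {α : Type*} [Fintype α] (X : Ω → α) :
    H p X = -∑ ω, p ω * Real.log (distOf p X (X ω)) := by
  rw [← sum_distOf_mul p X (fun a => Real.log (distOf p X a)), H, ← Finset.sum_neg_distrib]
  exact Finset.sum_congr rfl fun a _ => by rw [Real.negMulLog]; ring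

lemma le_distOf (hp : IsPMF p) {α : Type*} (X : Ω → α) (ω : Ω) : p ω ≤ distOf p X (X ω) := by
  unfold distOf
  refine Finset.single_le_sum (f := fun ω' => if X ω' = X ω then p ω' else 0)
    (fun ω' _ => ?_) (Finset.mem_univ ω) |>.trans_eq' (by simp)
  split <;> simp [hp.1 ω']

lemma distOf_comp_le (hp : IsPMF p) {α β : Type*} (X : Ω → α) (f : α → β) (a : α) :
    distOf p X a ≤ distOf p (fun ω => f (X ω)) (f a) := by
  refine Finset.sum_le_sum fun ω _ => ?_
  by_cases h : X ω = a
  · simp [h]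
  · simp [h]; split <;> simp [hp.1 ω]

lemma sum_distOf_fst (hp : IsPMF p) {α γ : Type*} [Fintype α] (W : Ω → α) (Z : Ω → γ) (z : γ) :
    ∑ x, distOf p (fun ω => (W ω, Z ω)) (x, z) = distOf p Z z := by
  unfold distOf
  rw [Finset.sum_comm]
  refine Finset.sum_congr rfl fun ω _ => ?_
  by_cases hz : Z ω = z <;>
    simp [Prod.ext_iff, hz, Finset.sum_ite_eq, Finset.sum_ite_eq']

lemma Hc_nonneg (hp : IsPMF p) {α β : Type*} [Fintype α] [Fintype β] (X : Ω → α) (Y : Ω → β) :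
    0 ≤ Hc p X Y := by
  rw [Hc, H_eq_sum_omega, H_eq_sum_omega, sub_nonneg, neg_le_neg_iff]
  refine Finset.sum_le_sum fun ω _ => ?_
  rcases eq_or_lt_of_le (hp.1 ω) with h0 | h0
  · simp [← h0]
  · have ha : 0 < distOf p (fun ω => (X ω, Y ω)) (X ω, Y ω) :=
      lt_of_lt_of_le h0 (le_distOf p hp _ ω)
    have hle : distOf p (fun ω => (X ω, Y ω)) (X ω, Y ω) ≤ distOf p Y (Y ω) :=
      distOf_comp_le p hp (fun ω => (X ω, Y ω)) (fun t => t.2) (X ω, Y ω)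
    exact mul_le_mul_of_nonneg_left (Real.log_le_log ha hle) (le_of_lt h0)


lemma CMI_nonneg (hp : IsPMF p) {α β γ : Type*} [Fintype α] [Fintype β] [Fintype γ]
    (X : Ω → α) (Y : Ω → β) (Z : Ω → γ) : 0 ≤ CMI p X Y Z := by
  classical
  set r : α × β × γ → ℝ := fun t =>
    distOf p (fun ω => (X ω, Z ω)) (t.1, t.2.2) *
      (distOf p (fun ω => (Y ω, Z ω)) t.2 / distOf p Z t.2.2) /
      distOf p (fun ω => (X ω, Y ω, Z ω)) t with hr
  -- termwise log bound
  have hterm : ∀ ω,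
      p ω * Real.log (distOf p (fun ω => (X ω, Z ω)) (X ω, Z ω))
        + p ω * Real.log (distOf p (fun ω => (Y ω, Z ω)) (Y ω, Z ω))
        - p ω * Real.log (distOf p (fun ω => (X ω, Y ω, Z ω)) (X ω, Y ω, Z ω))
        - p ω * Real.log (distOf p Z (Z ω))
      ≤ p ω * r (X ω, Y ω, Z ω) - p ω := by
    intro ω
    rcases eq_or_lt_of_le (hp.1 ω) with h0 | h0
    · simp [← h0]
    · have ha : 0 < distOf p (fun ω => (X ω, Y ω, Z ω)) (X ω, Y ω, Z ω) :=
        lt_of_lt_of_le h0 (le_distOf p hp _ ω)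
      have h1 : 0 < distOf p (fun ω => (X ω, Z ω)) (X ω, Z ω) :=
        lt_of_lt_of_le ha (distOf_comp_le p hp (fun ω => (X ω, Y ω, Z ω))
          (fun t => (t.1, t.2.2)) (X ω, Y ω, Z ω))
      have h2 : 0 < distOf p (fun ω => (Y ω, Z ω)) (Y ω, Z ω) :=
        lt_of_lt_of_le ha (distOf_comp_le p hp (fun ω => (X ω, Y ω, Z ω))
          (fun t => t.2) (X ω, Y ω, Z ω))
      have h3 : 0 < distOf p Z (Z ω) :=
        lt_of_lt_of_le ha (distOf_comp_le p hp (fun ω => (X ω, Y ω, Z ω))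
          (fun t => t.2.2) (X ω, Y ω, Z ω))
      have hrpos : 0 < r (X ω, Y ω, Z ω) := by
        rw [hr]
        exact div_pos (mul_pos h1 (div_pos h2 h3)) ha
      have hlog : Real.log (r (X ω, Y ω, Z ω))
          = Real.log (distOf p (fun ω => (X ω, Z ω)) (X ω, Z ω))
            + Real.log (distOf p (fun ω => (Y ω, Z ω)) (Y ω, Z ω))
            - Real.log (distOf p Z (Z ω))
            - Real.log (distOf p (fun ω => (X ω, Y ω, Z ω)) (X ω, Y ω, Z ω)) := by
        rw [hr]
        simp only []
        rw [Real.log_div (by positivity) (ne_of_gt ha),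
          Real.log_mul (ne_of_gt h1) (by positivity),
          Real.log_div (ne_of_gt h2) (ne_of_gt h3)]
        ring
      have hls := Real.log_le_sub_one_of_pos hrpos
      calc p ω * Real.log (distOf p (fun ω => (X ω, Z ω)) (X ω, Z ω))
            + p ω * Real.log (distOf p (fun ω => (Y ω, Z ω)) (Y ω, Z ω))
            - p ω * Real.log (distOf p (fun ω => (X ω, Y ω, Z ω)) (X ω, Y ω, Z ω))
            - p ω * Real.log (distOf p Z (Z ω))
          = p ω * Real.log (r (X ω, Y ω, Z ω)) := by rw [hlog]; ring
        _ ≤ p ω * (r (X ω, Y ω, Z ω) - 1) :=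
            mul_le_mul_of_nonneg_left hls (le_of_lt h0)
        _ = p ω * r (X ω, Y ω, Z ω) - p ω := by ring
  -- the reweighted sum is at most 1
  have hbound : ∀ t : α × β × γ, distOf p (fun ω => (X ω, Y ω, Z ω)) t * r t
      ≤ distOf p (fun ω => (X ω, Z ω)) (t.1, t.2.2) *
        (distOf p (fun ω => (Y ω, Z ω)) t.2 / distOf p Z t.2.2) := by
    intro t
    rcases eq_or_lt_of_le (distOf_nonneg p hp (fun ω => (X ω, Y ω, Z ω)) t) with h0 | h0
    · rw [← h0, zero_mul]
      have n1 := distOf_nonneg p hp (fun ω => (X ω, Z ω)) (t.1, t.2.2)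
      have n2 := distOf_nonneg p hp (fun ω => (Y ω, Z ω)) t.2
      have n3 := distOf_nonneg p hp Z t.2.2
      positivity
    · rw [hr]
      simp only []
      rw [← mul_div_assoc, mul_div_assoc' , mul_comm, mul_div_assoc,
        div_self (ne_of_gt h0), mul_one]
  have hsum2 : ∑ t : α × β × γ,
      distOf p (fun ω => (X ω, Z ω)) (t.1, t.2.2) *
        (distOf p (fun ω => (Y ω, Z ω)) t.2 / distOf p Z t.2.2) = 1 := by
    have hinner : ∀ u : β × γ,
        ∑ x, distOf p (fun ω => (X ω, Z ω)) (x, u.2) *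
          (distOf p (fun ω => (Y ω, Z ω)) u / distOf p Z u.2)
        = distOf p (fun ω => (Y ω, Z ω)) u := by
      intro u
      rw [← Finset.sum_mul, sum_distOf_fst p hp X Z u.2]
      rcases eq_or_lt_of_le (distOf_nonneg p hp Z u.2) with h0 | h0
      · have hyz : distOf p (fun ω => (Y ω, Z ω)) u = 0 := by
          refine le_antisymm ?_ (distOf_nonneg p hp _ u)
          rw [h0]
          exact distOf_comp_le p hp (fun ω => (Y ω, Z ω)) (fun t => t.2) u
        simp [hyz, ← h0]
      · rw [mul_comm, div_mul_cancel₀ _ (ne_of_gt h0)]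
    rw [Fintype.sum_prod_type]
    rw [Finset.sum_comm]
    rw [Finset.sum_congr rfl fun u _ => hinner u]
    rw [sum_distOf p (fun ω => (Y ω, Z ω)), hp.2]
  have hsum1 : ∑ ω, (p ω * r (X ω, Y ω, Z ω) - p ω)
      = (∑ t, distOf p (fun ω => (X ω, Y ω, Z ω)) t * r t) - 1 := by
    rw [Finset.sum_sub_distrib, hp.2, sum_distOf_mul p (fun ω => (X ω, Y ω, Z ω)) r]
  have hS : ∑ ω, (p ω * Real.log (distOf p (fun ω => (X ω, Z ω)) (X ω, Z ω))
        + p ω * Real.log (distOf p (fun ω => (Y ω, Z ω)) (Y ω, Z ω))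
        - p ω * Real.log (distOf p (fun ω => (X ω, Y ω, Z ω)) (X ω, Y ω, Z ω))
        - p ω * Real.log (distOf p Z (Z ω))) ≤ 0 := by
    calc ∑ ω, (p ω * Real.log (distOf p (fun ω => (X ω, Z ω)) (X ω, Z ω))
        + p ω * Real.log (distOf p (fun ω => (Y ω, Z ω)) (Y ω, Z ω))
        - p ω * Real.log (distOf p (fun ω => (X ω, Y ω, Z ω)) (X ω, Y ω, Z ω))
        - p ω * Real.log (distOf p Z (Z ω)))
        ≤ ∑ ω, (p ω * r (X ω, Y ω, Z ω) - p ω) := Finset.sum_le_sum fun ω _ => hterm ω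
      _ = (∑ t, distOf p (fun ω => (X ω, Y ω, Z ω)) t * r t) - 1 := hsum1
      _ ≤ 0 := by
          have := Finset.sum_le_sum (s := (Finset.univ : Finset (α × β × γ))) fun t _ => hbound t
          rw [hsum2] at this
          linarith
  have hexp : ∑ ω, (p ω * Real.log (distOf p (fun ω => (X ω, Z ω)) (X ω, Z ω))
        + p ω * Real.log (distOf p (fun ω => (Y ω, Z ω)) (Y ω, Z ω))
        - p ω * Real.log (distOf p (fun ω => (X ω, Y ω, Z ω)) (X ω, Y ω, Z ω))
        - p ω * Real.log (distOf p Z (Z ω)))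
      = (∑ ω, p ω * Real.log (distOf p (fun ω => (X ω, Z ω)) (X ω, Z ω)))
        + (∑ ω, p ω * Real.log (distOf p (fun ω => (Y ω, Z ω)) (Y ω, Z ω)))
        - (∑ ω, p ω * Real.log (distOf p (fun ω => (X ω, Y ω, Z ω)) (X ω, Y ω, Z ω)))
        - (∑ ω, p ω * Real.log (distOf p Z (Z ω))) := by
    rw [Finset.sum_sub_distrib, Finset.sum_sub_distrib, Finset.sum_add_distrib]
  have e1 : H p (fun ω => (X ω, Z ω))
      = -∑ ω, p ω * Real.log (distOf p (fun ω => (X ω, Z ω)) (X ω, Z ω)) :=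
    H_eq_sum_omega p _
  have e2 : H p (fun ω => (Y ω, Z ω))
      = -∑ ω, p ω * Real.log (distOf p (fun ω => (Y ω, Z ω)) (Y ω, Z ω)) :=
    H_eq_sum_omega p _
  have e3 : H p (fun ω => (X ω, Y ω, Z ω))
      = -∑ ω, p ω * Real.log (distOf p (fun ω => (X ω, Y ω, Z ω)) (X ω, Y ω, Z ω)) :=
    H_eq_sum_omega p _
  have e4 : H p Z = -∑ ω, p ω * Real.log (distOf p Z (Z ω)) := H_eq_sum_omega p _
  rw [CMI, e1, e2, e3, e4]
  rw [hexp] at hS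
  linarith

lemma H_comp {α β : Type*} [Fintype α] [Fintype β] (X : Ω → α) (g : α → β)
    (hg : Function.Injective g) : H p (fun ω => g (X ω)) = H p X := by
  have hd : ∀ a, distOf p (fun ω => g (X ω)) (g a) = distOf p X a := by
    intro a
    exact Finset.sum_congr rfl fun ω _ => by simp [hg.eq_iff]
  unfold H
  rw [show (∑ a : α, Real.negMulLog (distOf p X a))
      = ∑ b ∈ Finset.univ.image g, Real.negMulLog (distOf p (fun ω => g (X ω)) b) from by
    rw [Finset.sum_image (fun a _ b _ h => hg h)]
    exact (Finset.sum_congr rfl fun a _ => by rw [hd]).symm]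
  refine (Finset.sum_subset (Finset.subset_univ _) fun b _ hb => ?_).symm
  · simp only [Finset.mem_image, Finset.mem_univ, true_and] at hb
    have : distOf p (fun ω => g (X ω)) b = 0 := by
      unfold distOf
      refine Finset.sum_eq_zero fun ω _ => ?_
      have : g (X ω) ≠ b := fun h => hb ⟨X ω, h⟩
      simp [this]
    simp [this, Real.negMulLog]

lemma MI_nonneg (hp : IsPMF p) {α β : Type*} [Fintype α] [Fintype β]
    (X : Ω → α) (Y : Ω → β) : 0 ≤ MI p X Y := by
  have h := CMI_nonneg p hp X Y (fun _ => (() : Unit))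
  rw [CMI] at h
  have h1 : H p (fun ω => (X ω, ())) = H p X :=
    H_comp p X (fun x => (x, ())) (fun a b hab => by simpa using hab)
  have h2 : H p (fun ω => (Y ω, ())) = H p Y :=
    H_comp p Y (fun y => (y, ())) (fun a b hab => by simpa using hab)
  have h3 : H p (fun ω => (X ω, Y ω, ())) = H p (fun ω => (X ω, Y ω)) :=
    H_comp p (fun ω => (X ω, Y ω)) (fun t => (t.1, t.2, ()))
      (fun a b hab => by simpa [Prod.ext_iff] using hab)
  have h4 : H p (fun _ : Ω => ()) = 0 := by
    have : distOf p (fun _ : Ω => ()) () = 1 := by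
      unfold distOf; simpa using hp.2
    simp [H, this, Real.negMulLog]
  rw [h1, h2, h3, h4] at h
  rw [MI]
  linarith


end SDMM

/-- **Lemma 3 (`I(Δ ; AB | A) = 0`).**
If the download `Δ` is a function of the shares `S` and side-information `A`,
the shares reveal nothing about `B`, `A` is independent of `(B, S)`, and the
desired product `P` is a function of `(A, B)`, then `I(Δ ; P | A) = 0`. -/
theorem download_independent_of_product_given_side_information
    (Ω : Type) [Fintype Ω] (p : Ω → ℝ) (hp : SDMM.IsPMF p)
    {αA αB αS αΔ αP : Type} [Fintype αA] [Fintype αB] [Fintype αS]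
    [Fintype αΔ] [Fintype αP]
    (A : Ω → αA) (B : Ω → αB) (S : Ω → αS) (Δ : Ω → αΔ) (P : Ω → αP)
    (hΔ : SDMM.Hc p Δ (fun ω => (S ω, A ω)) = 0)
    (hSB : SDMM.MI p S B = 0)
    (hA : SDMM.MI p A (fun ω => (B ω, S ω)) = 0)
    (hP : SDMM.Hc p P (fun ω => (A ω, B ω)) = 0) :
    SDMM.CMI p Δ P A = 0 := by
  classical
  simp only [SDMM.Hc] at hΔ hP
  simp only [SDMM.MI] at hSB hA
  simp only [SDMM.CMI]
  have R_BS : SDMM.H p (fun ω => (S ω, B ω)) = SDMM.H p (fun ω => (B ω, S ω)) :=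
    SDMM.H_comp p (fun ω => (B ω, S ω)) (fun t => (t.2, t.1))
      (fun a b h => by simp only [Prod.ext_iff] at h ⊢; tauto)
  have R_ABS : SDMM.H p (fun ω => (S ω, A ω, B ω)) = SDMM.H p (fun ω => (A ω, B ω, S ω)) :=
    SDMM.H_comp p (fun ω => (A ω, B ω, S ω)) (fun t => (t.2.2, t.1, t.2.1))
      (fun a b h => by simp only [Prod.ext_iff] at h ⊢; tauto)
  have R_BPA : SDMM.H p (fun ω => (P ω, A ω, B ω)) = SDMM.H p (fun ω => (B ω, P ω, A ω)) :=
    SDMM.H_comp p (fun ω => (B ω, P ω, A ω)) (fun t => (t.2.1, t.2.2, t.1))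
      (fun a b h => by simp only [Prod.ext_iff] at h ⊢; tauto)
  have R_DBPA : SDMM.H p (fun ω => (Δ ω, P ω, A ω, B ω))
      = SDMM.H p (fun ω => (Δ ω, B ω, P ω, A ω)) :=
    SDMM.H_comp p (fun ω => (Δ ω, B ω, P ω, A ω)) (fun t => (t.1, t.2.2.1, t.2.2.2, t.2.1))
      (fun a b h => by simp only [Prod.ext_iff] at h ⊢; tauto)
  have R_PDAB : SDMM.H p (fun ω => (Δ ω, P ω, A ω, B ω))
      = SDMM.H p (fun ω => (P ω, Δ ω, A ω, B ω)) :=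
    SDMM.H_comp p (fun ω => (P ω, Δ ω, A ω, B ω)) (fun t => (t.2.1, t.1, t.2.2))
      (fun a b h => by simp only [Prod.ext_iff] at h ⊢; tauto)
  have R_SDA : SDMM.H p (fun ω => (Δ ω, S ω, A ω)) = SDMM.H p (fun ω => (S ω, Δ ω, A ω)) :=
    SDMM.H_comp p (fun ω => (S ω, Δ ω, A ω)) (fun t => (t.2.1, t.1, t.2.2))
      (fun a b h => by simp only [Prod.ext_iff] at h ⊢; tauto)
  have R_BDA : SDMM.H p (fun ω => (Δ ω, A ω, B ω)) = SDMM.H p (fun ω => (B ω, Δ ω, A ω)) :=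
    SDMM.H_comp p (fun ω => (B ω, Δ ω, A ω)) (fun t => (t.2.1, t.2.2, t.1))
      (fun a b h => by simp only [Prod.ext_iff] at h ⊢; tauto)
  have R_SBDA : SDMM.H p (fun ω => (Δ ω, S ω, A ω, B ω))
      = SDMM.H p (fun ω => (S ω, B ω, Δ ω, A ω)) :=
    SDMM.H_comp p (fun ω => (S ω, B ω, Δ ω, A ω)) (fun t => (t.2.2.1, t.1, t.2.2.2, t.2.1))
      (fun a b h => by simp only [Prod.ext_iff] at h ⊢; tauto)
  have R_AS : SDMM.H p (fun ω => (S ω, A ω)) = SDMM.H p (fun ω => (A ω, S ω)) :=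
    SDMM.H_comp p (fun ω => (A ω, S ω)) (fun t => (t.2, t.1))
      (fun a b h => by simp only [Prod.ext_iff] at h ⊢; tauto)
  have N1 : 0 ≤ SDMM.H p (fun ω => (Δ ω, A ω)) + SDMM.H p (fun ω => (P ω, A ω))
      - SDMM.H p (fun ω => (Δ ω, P ω, A ω)) - SDMM.H p A := by
    simpa only [SDMM.CMI] using SDMM.CMI_nonneg p hp Δ P A
  have N2 : 0 ≤ SDMM.H p (fun ω => (Δ ω, P ω, A ω)) + SDMM.H p (fun ω => (B ω, P ω, A ω))
      - SDMM.H p (fun ω => (Δ ω, B ω, P ω, A ω)) - SDMM.H p (fun ω => (P ω, A ω)) := by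
    simpa only [SDMM.CMI] using SDMM.CMI_nonneg p hp Δ B (fun ω => (P ω, A ω))
  have N3 : 0 ≤ SDMM.H p (fun ω => (P ω, Δ ω, A ω, B ω))
      - SDMM.H p (fun ω => (Δ ω, A ω, B ω)) := by
    simpa only [SDMM.Hc] using SDMM.Hc_nonneg p hp P (fun ω => (Δ ω, A ω, B ω))
  have N5 : 0 ≤ SDMM.H p (fun ω => (S ω, Δ ω, A ω)) + SDMM.H p (fun ω => (B ω, Δ ω, A ω))
      - SDMM.H p (fun ω => (S ω, B ω, Δ ω, A ω)) - SDMM.H p (fun ω => (Δ ω, A ω)) := by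
    simpa only [SDMM.CMI] using SDMM.CMI_nonneg p hp S B (fun ω => (Δ ω, A ω))
  have N6 : 0 ≤ SDMM.H p (fun ω => (Δ ω, S ω, A ω, B ω))
      - SDMM.H p (fun ω => (S ω, A ω, B ω)) := by
    simpa only [SDMM.Hc] using SDMM.Hc_nonneg p hp Δ (fun ω => (S ω, A ω, B ω))
  have N8 : 0 ≤ SDMM.H p A + SDMM.H p S - SDMM.H p (fun ω => (A ω, S ω)) := by
    simpa only [SDMM.MI] using SDMM.MI_nonneg p hp A S
  have N12 : 0 ≤ SDMM.H p A + SDMM.H p B - SDMM.H p (fun ω => (A ω, B ω)) := by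
    simpa only [SDMM.MI] using SDMM.MI_nonneg p hp A B
  linarith [hΔ, hSB, hA, hP, R_BS, R_ABS, R_BPA, R_DBPA, R_PDAB, R_SDA, R_BDA, R_SBDA,
    R_AS, N1, N2, N3, N5, N6, N8, N12]
end
end
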